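/- arXiv:2312.17152 — 6 statements merged into one kernel-verified Lean document; each statement's English description precedes it below -/
import Mathlib

section
/- Let A be an n×n Hermitian complex matrix whose entries all have absolute value at most 1, with zero diagonal, and such that A is the adjacency matrix of a complex unit gain graph on a connected graph G with at least one edge. Then for every vertex index i, the vertex energy E_A(v_i) := ((A A*)^{1/2})_{ii} satisfies E_A(v_i) ≥ d(v_i)/ρ(G), where d(v_i) is the degree of v_i in G and ρ(G) is the spectral radius of the (0,1)-adjacency matrix of G. -/
open Matrix BigOperators
open scoped ComplexOrder

/-- `A` is the (Hermitian) adjacency matrix of a complex unit gain graph on `G`: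
unit-modulus entries on edges, zero elsewhere (in particular zero diagonal and
all entries of absolute value at most 1). -/
def IsGainMatrix {n : ℕ} (G : SimpleGraph (Fin n)) (A : Matrix (Fin n) (Fin n) ℂ) : Prop :=
  A.IsHermitian ∧ (∀ i j, G.Adj i j → ‖A i j‖ = 1) ∧
    ∀ i j, ¬ G.Adj i j → A i j = 0

theorem adjMatrix_isHermitian {n : ℕ} (G : SimpleGraph (Fin n)) [DecidableRel G.Adj] :
    (G.adjMatrix ℝ).IsHermitian := by
  ext i j
  simp [Matrix.conjTranspose_apply, SimpleGraph.adj_comm]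

/-- The spectral radius of the underlying graph `G`, i.e. the largest eigenvalue of
its 0-1 adjacency matrix. -/
noncomputable def specRad {n : ℕ} (G : SimpleGraph (Fin n)) [DecidableRel G.Adj] : ℝ :=
  ⨆ i, (adjMatrix_isHermitian G).eigenvalues i

/-- The energy of the vertex `i`: the `(i,i)` entry of `(A Aᴴ)^(1/2)`. -/
noncomputable def vertexEnergy {n : ℕ} (A : Matrix (Fin n) (Fin n) ℂ) (i : Fin n) : ℝ :=
  (((Matrix.posSemidef_self_mul_conjTranspose A).1.eigenvectorUnitary.1 *
    diagonal (((↑) : ℝ → ℂ) ∘ Real.sqrt ∘ (Matrix.posSemidef_self_mul_conjTranspose A).1.eigenvalues) *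
    (star (Matrix.posSemidef_self_mul_conjTranspose A).1.eigenvectorUnitary :
      Matrix (Fin n) (Fin n) ℂ)) i i).re

/-! Diagonalize `A = U diag(μ) Uᴴ` and put `w k = ‖U i k‖²`. Then `E(vᵢ) = ∑ |μ k| w k` and
`d(vᵢ) = (A Aᴴ)ᵢᵢ = ∑ (μ k)² w k`. Each `|μ k| ≤ ρ(G)`: for a unit eigenvector `x`, the entrywise
bound `‖A p q‖ ≤ B p q` by the 0-1 adjacency matrix `B` of `G` gives
`|μ k| = |x* A x| ≤ |x|ᵀ B |x| ≤ ρ(G)`. Hence `d(vᵢ) ≤ ρ(G) E(vᵢ)`. -/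

open scoped MatrixOrder

section

variable {n 𝕜 : Type*} [Fintype n] [RCLike 𝕜]

theorem Matrix.norm_dotProduct_mulVec_le {A : Matrix n n 𝕜} {N : Matrix n n ℝ}
    (hAN : ∀ p q, ‖A p q‖ ≤ N p q) (x : n → 𝕜) :
    ‖star x ⬝ᵥ A *ᵥ x‖ ≤ (‖x ·‖) ⬝ᵥ N *ᵥ (‖x ·‖) := by
  simp only [dotProduct, mulVec]
  refine (norm_sum_le _ _).trans (Finset.sum_le_sum fun p _ => ?_)
  rw [norm_mul, Pi.star_apply, norm_star]
  refine mul_le_mul_of_nonneg_left ((norm_sum_le _ _).trans (Finset.sum_le_sum fun q _ => ?_))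
    (norm_nonneg _)
  rw [norm_mul]
  exact mul_le_mul_of_nonneg_right (hAN p q) (norm_nonneg _)

variable [DecidableEq n]

theorem Matrix.IsHermitian.re_dotProduct_mulVec_le {A : Matrix n n 𝕜} (hA : A.IsHermitian)
    {r : ℝ} (hr : ∀ k, hA.eigenvalues k ≤ r) (x : n → 𝕜) :
    RCLike.re (star x ⬝ᵥ A *ᵥ x) ≤ r * RCLike.re (star x ⬝ᵥ x) := by
  have hle : A ≤ algebraMap ℝ _ r := le_algebraMap_of_spectrum_le (by
    rw [hA.spectrum_real_eq_range_eigenvalues]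
    rintro _ ⟨k, rfl⟩
    exact hr k) hA.isSelfAdjoint
  have := (Matrix.le_iff.mp hle).dotProduct_mulVec_nonneg x
  simp only [Algebra.algebraMap_eq_smul_one, sub_mulVec, smul_mulVec, one_mulVec, dotProduct_sub,
    dotProduct_smul, sub_nonneg] at this
  simpa only [RCLike.smul_re] using (RCLike.le_iff_re_im.mp this).1

theorem Matrix.IsHermitian.abs_eigenvalues_le {A : Matrix n n 𝕜} (hA : A.IsHermitian)
    {N : Matrix n n ℝ} (hN : N.IsHermitian) (hAN : ∀ p q, ‖A p q‖ ≤ N p q) {r : ℝ}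
    (hr : ∀ k, hN.eigenvalues k ≤ r) (k : n) : |hA.eigenvalues k| ≤ r := by
  set x : n → 𝕜 := ⇑(hA.eigenvectorBasis k)
  have hx : (‖x ·‖) ⬝ᵥ (‖x ·‖) = 1 := by
    have := hA.eigenvectorBasis.orthonormal.1 k
    rw [EuclideanSpace.norm_eq, Real.sqrt_eq_one] at this
    simpa only [dotProduct, sq] using this
  calc |hA.eigenvalues k| = |RCLike.re (star x ⬝ᵥ A *ᵥ x)| := by rw [hA.eigenvalues_eq]
    _ ≤ ‖star x ⬝ᵥ A *ᵥ x‖ := RCLike.abs_re_le_norm _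
    _ ≤ (‖x ·‖) ⬝ᵥ N *ᵥ (‖x ·‖) := norm_dotProduct_mulVec_le hAN x
    _ ≤ r * ((‖x ·‖) ⬝ᵥ (‖x ·‖)) := by simpa using hN.re_dotProduct_mulVec_le hr (‖x ·‖)
    _ = r := by rw [hx, mul_one]

theorem Matrix.IsHermitian.re_cfc_apply_self {A : Matrix n n 𝕜} (hA : A.IsHermitian)
    (f : ℝ → ℝ) (i : n) :
    RCLike.re (cfc f A i i) =
      ∑ k, f (hA.eigenvalues k) * ‖(hA.eigenvectorUnitary : Matrix n n 𝕜) i k‖ ^ 2 := by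
  rw [hA.cfc_eq, IsHermitian.cfc, Unitary.conjStarAlgAut_apply, mul_apply, map_sum]
  refine Finset.sum_congr rfl fun k _ => ?_
  rw [mul_diagonal, star_apply, Function.comp_apply, Function.comp_apply, mul_right_comm,
    RCLike.star_def, RCLike.mul_conj, mul_comm, ← RCLike.ofReal_pow, ← RCLike.ofReal_mul,
    RCLike.ofReal_re]

theorem Matrix.IsHermitian.sqrt_mul_conjTranspose_self {A : Matrix n n 𝕜} (hA : A.IsHermitian) :
    CFC.sqrt (A * Aᴴ) = cfc (‖·‖) A := by
  rw [← CFC.abs_eq_cfc_norm A hA.isSelfAdjoint, CFC.abs, star_eq_conjTranspose, hA.eq]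

end

theorem vertexEnergy_eq_re_sqrt {n : ℕ} (A : Matrix (Fin n) (Fin n) ℂ) (i : Fin n) :
    vertexEnergy A i = (CFC.sqrt (A * Aᴴ) i i).re := by
  have hP := Matrix.posSemidef_self_mul_conjTranspose A
  rw [vertexEnergy, CFC.sqrt_eq_real_sqrt _ (Matrix.nonneg_iff_posSemidef.mpr hP), cfcₙ_eq_cfc,
    hP.1.cfc_eq, IsHermitian.cfc, Unitary.conjStarAlgAut_apply]
  rfl

namespace IsGainMatrix

variable {n : ℕ} {G : SimpleGraph (Fin n)} [DecidableRel G.Adj] {A : Matrix (Fin n) (Fin n) ℂ}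

theorem norm_apply (hA : IsGainMatrix G A) (p q : Fin n) : ‖A p q‖ = G.adjMatrix ℝ p q := by
  by_cases h : G.Adj p q
  · simp [h, hA.2.1 p q h]
  · simp [h, hA.2.2 p q h]

theorem abs_eigenvalues_le_specRad (hA : IsGainMatrix G A) (k : Fin n) :
    |hA.1.eigenvalues k| ≤ specRad G :=
  hA.1.abs_eigenvalues_le (adjMatrix_isHermitian G) (fun p q => (hA.norm_apply p q).le)
    (fun k => le_ciSup (Set.finite_range _).bddAbove k) k

theorem re_mul_conjTranspose_apply_self (hA : IsGainMatrix G A) (i : Fin n) :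
    ((A * Aᴴ) i i).re = G.degree i := by
  rw [← G.adjMatrix_mul_self_apply_self (α := ℝ), mul_apply, mul_apply, Complex.re_sum]
  refine Finset.sum_congr rfl fun j _ => ?_
  rw [conjTranspose_apply, RCLike.star_def, Complex.mul_conj, Complex.ofReal_re,
    Complex.normSq_eq_norm_sq, hA.norm_apply, sq, G.isSymm_adjMatrix.apply]

end IsGainMatrix

theorem vertexEnergy_ge_degree_div_specRad_general {n : ℕ} (G : SimpleGraph (Fin n))
    [DecidableRel G.Adj] (A : Matrix (Fin n) (Fin n) ℂ) (hA : IsGainMatrix G A) :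
    ∀ i : Fin n, (G.degree i : ℝ) / specRad G ≤ vertexEnergy A i := by
  intro i
  set μ := hA.1.eigenvalues
  set w : Fin n → ℝ := fun k => ‖(hA.1.eigenvectorUnitary : Matrix (Fin n) (Fin n) ℂ) i k‖ ^ 2
  have hE : vertexEnergy A i = ∑ k, |μ k| * w k := by
    rw [vertexEnergy_eq_re_sqrt, hA.1.sqrt_mul_conjTranspose_self]
    exact hA.1.re_cfc_apply_self _ i
  have hdeg : (G.degree i : ℝ) = ∑ k, μ k ^ 2 * w k := by
    rw [← hA.re_mul_conjTranspose_apply_self, hA.1.eq, ← sq,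
      ← cfc_pow_id (R := ℝ) A 2 hA.1.isSelfAdjoint]
    exact hA.1.re_cfc_apply_self _ i
  have hρ : ∀ k, |μ k| ≤ specRad G := hA.abs_eigenvalues_le_specRad
  refine div_le_of_le_mul₀ ((abs_nonneg _).trans (hρ i))
    (hE ▸ Finset.sum_nonneg fun k _ => by positivity) ?_
  rw [hE, hdeg, Finset.sum_mul]
  refine Finset.sum_le_sum fun k _ => ?_
  calc μ k ^ 2 * w k = |μ k| * w k * |μ k| := by rw [sq, ← abs_mul_abs_self]; ring
    _ ≤ |μ k| * w k * specRad G := by gcongr; exact hρ k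

theorem vertexEnergy_ge_degree_div_specRad {n : ℕ} (G : SimpleGraph (Fin n))
    [DecidableRel G.Adj] (A : Matrix (Fin n) (Fin n) ℂ) (hA : IsGainMatrix G A)
    (habs : ∀ i j, ‖A i j‖ ≤ 1) (hdiag : ∀ i, A i i = 0)
    (hconn : G.Connected) (hedge : ∃ u v, G.Adj u v) :
    ∀ i : Fin n, (G.degree i : ℝ) / specRad G ≤ vertexEnergy A i :=
  vertexEnergy_ge_degree_div_specRad_general G A hA
end

section
/- Let Φ = (G, φ) be a complex unit gain graph on a connected triangle-free simple graph G with minimum vertex degree δ. Then the energy E(Φ) = Σ|λ_i(A(Φ))| satisfies E(Φ) ≥ 2δ. -/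
/-!
Let `u` be a vertex of minimum degree `δ` and `S` its neighbourhood, an independent set since `G`
is triangle-free. Let `M` be the part of `A` on the edges between `S` and its complement, and `F`
its squared Frobenius norm, so that `F = ∑_{s ∈ S} deg s ≥ δ²`. On one hand `tr (A M) = 2F`. On the
other hand `tr (A M) = ∑ λᵢ ⟪vᵢ, M vᵢ⟫` over an orthonormal eigenbasis, and Cauchy–Schwarz on the
two off-diagonal blocks gives `|⟪x, M x⟫| ≤ √F ‖x‖²`, so `2F ≤ E(Φ) √F`. Hence `E(Φ) ≥ 2√F ≥ 2δ`.
-/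

open Matrix BigOperators

/-- The energy of a Hermitian matrix: the sum of the absolute values of its eigenvalues. -/
noncomputable def energy {n : ℕ} {A : Matrix (Fin n) (Fin n) ℂ} (hA : A.IsHermitian) : ℝ :=
  ∑ i, |hA.eigenvalues i|

open Finset

theorem Finset.sum_sum_ite_mem_iff {ι α : Type*} [Fintype ι] [DecidableEq ι] [AddCommMonoid α]
    (S : Finset ι) (f : ι → ι → α) :
    ∑ k, ∑ j, (if (k ∈ S ↔ j ∈ S) then 0 else f k j) =
      ∑ k ∈ S, ∑ j ∈ Sᶜ, f k j + ∑ k ∈ Sᶜ, ∑ j ∈ S, f k j := by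
  rw [← sum_add_sum_compl S]
  congr 1 <;> refine sum_congr rfl fun k hk => ?_ <;>
    simp_all [sum_ite, filter_not, compl_eq_univ_sdiff]

namespace Matrix

variable {ι 𝕜 : Type*} [RCLike 𝕜]

theorem norm_sum_sum_star_mul_mul_le (s t : Finset ι) (B : Matrix ι ι 𝕜) (x y : ι → 𝕜) :
    ‖∑ k ∈ s, ∑ j ∈ t, star (x k) * B k j * y j‖ ≤
      √(∑ k ∈ s, ∑ j ∈ t, ‖B k j‖ ^ 2) * (√(∑ k ∈ s, ‖x k‖ ^ 2) * √(∑ j ∈ t, ‖y j‖ ^ 2)) := by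
  calc ‖∑ k ∈ s, ∑ j ∈ t, star (x k) * B k j * y j‖
      ≤ ∑ p ∈ s ×ˢ t, ‖B p.1 p.2‖ * (‖x p.1‖ * ‖y p.2‖) := by
        rw [← sum_product']
        refine (norm_sum_le _ _).trans_eq (sum_congr rfl fun p _ => ?_)
        simp only [norm_mul, norm_star]
        ring
    _ ≤ √(∑ p ∈ s ×ˢ t, ‖B p.1 p.2‖ ^ 2) * √(∑ p ∈ s ×ˢ t, (‖x p.1‖ * ‖y p.2‖) ^ 2) :=
        Real.sum_mul_le_sqrt_mul_sqrt _ _ _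
    _ = _ := by
        simp only [sum_product, mul_pow, ← sum_mul_sum,
          Real.sqrt_mul (sum_nonneg fun _ _ => sq_nonneg _)]

theorem IsHermitian.apply_mul_apply_swap {A : Matrix ι ι 𝕜} (hA : A.IsHermitian) (k j : ι) :
    A j k * A k j = (‖A k j‖ ^ 2 : ℝ) := by
  rw [← hA.apply j k, RCLike.star_def, RCLike.conj_mul]
  norm_cast

variable [DecidableEq ι]

def cutPart {α : Type*} [Zero α] (A : Matrix ι ι α) (S : Finset ι) : Matrix ι ι α :=
  of fun k j => if (k ∈ S ↔ j ∈ S) then 0 else A k j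

variable [Fintype ι]

theorem IsHermitian.trace_mul_eq_sum_eigenvalues_mul {A : Matrix ι ι 𝕜} (hA : A.IsHermitian)
    (M : Matrix ι ι 𝕜) :
    (A * M).trace = ∑ i, (hA.eigenvalues i : 𝕜) *
      (star ⇑(hA.eigenvectorBasis i) ⬝ᵥ M *ᵥ ⇑(hA.eigenvectorBasis i)) := by
  conv_lhs => rw [hA.spectral_theorem, Unitary.conjStarAlgAut_apply]
  rw [trace_mul_cycle, ← Matrix.mul_assoc, trace_mul_comm, ← Matrix.mul_assoc, trace]
  refine sum_congr rfl fun i _ => ?_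
  simp only [diag_apply, mul_diagonal, Function.comp_apply, mul_comm (RCLike.ofReal _)]
  simp only [mul_apply, dotProduct, mulVec, star_apply, Pi.star_apply,
    eigenvectorUnitary_apply, RCLike.star_def]

noncomputable def cutMass (A : Matrix ι ι 𝕜) (S : Finset ι) : ℝ :=
  ∑ k ∈ S, ∑ j ∈ Sᶜ, ‖A k j‖ ^ 2

theorem cutMass_nonneg (A : Matrix ι ι 𝕜) (S : Finset ι) : 0 ≤ cutMass A S :=
  sum_nonneg fun _ _ => sum_nonneg fun _ _ => sq_nonneg _

theorem IsHermitian.cutMass_compl {A : Matrix ι ι 𝕜} (hA : A.IsHermitian) (S : Finset ι) :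
    ∑ k ∈ Sᶜ, ∑ j ∈ S, ‖A k j‖ ^ 2 = cutMass A S := by
  rw [sum_comm, cutMass]
  refine sum_congr rfl fun k _ => sum_congr rfl fun j _ => ?_
  rw [← hA.apply, norm_star]

theorem IsHermitian.trace_mul_cutPart {A : Matrix ι ι 𝕜} (hA : A.IsHermitian) (S : Finset ι) :
    (A * cutPart A S).trace = (2 * cutMass A S : ℝ) := by
  have h : (A * cutPart A S).trace =
      ∑ k, ∑ j, (if (k ∈ S ↔ j ∈ S) then 0 else A j k * A k j) := by
    rw [trace, sum_comm]
    simp only [diag_apply, mul_apply, cutPart, of_apply, mul_ite, mul_zero]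
  rw [h, sum_sum_ite_mem_iff]
  simp only [hA.apply_mul_apply_swap, ← RCLike.ofReal_sum]
  rw [hA.cutMass_compl, ← cutMass]
  push_cast
  ring

theorem IsHermitian.norm_dotProduct_cutPart_mulVec_le {A : Matrix ι ι 𝕜} (hA : A.IsHermitian)
    (S : Finset ι) (x : EuclideanSpace 𝕜 ι) :
    ‖star ⇑x ⬝ᵥ cutPart A S *ᵥ ⇑x‖ ≤ √(cutMass A S) * ‖x‖ ^ 2 := by
  set a := √(∑ k ∈ S, ‖x k‖ ^ 2)
  set b := √(∑ k ∈ Sᶜ, ‖x k‖ ^ 2)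
  have hx : ‖x‖ ^ 2 = a ^ 2 + b ^ 2 := by
    rw [EuclideanSpace.norm_sq_eq, ← sum_add_sum_compl S,
      Real.sq_sqrt (sum_nonneg fun _ _ => sq_nonneg _),
      Real.sq_sqrt (sum_nonneg fun _ _ => sq_nonneg _)]
  have hsplit : star ⇑x ⬝ᵥ cutPart A S *ᵥ ⇑x =
      ∑ k ∈ S, ∑ j ∈ Sᶜ, star (x k) * A k j * x j +
        ∑ k ∈ Sᶜ, ∑ j ∈ S, star (x k) * A k j * x j := by
    rw [← sum_sum_ite_mem_iff]
    simp only [dotProduct, mulVec, cutPart, of_apply, mul_sum, Pi.star_apply, ite_mul, mul_ite,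
      zero_mul, mul_zero, mul_assoc]
  have hS := norm_sum_sum_star_mul_mul_le S Sᶜ A x x
  have hSc := norm_sum_sum_star_mul_mul_le Sᶜ S A x x
  rw [← cutMass] at hS
  rw [hA.cutMass_compl] at hSc
  calc ‖star ⇑x ⬝ᵥ cutPart A S *ᵥ ⇑x‖
      ≤ √(cutMass A S) * (a * b) + √(cutMass A S) * (b * a) := by
        rw [hsplit]
        exact (norm_add_le _ _).trans (add_le_add hS hSc)
    _ ≤ √(cutMass A S) * ‖x‖ ^ 2 := by
        rw [hx, ← mul_add]
        exact mul_le_mul_of_nonneg_left (by nlinarith [two_mul_le_add_sq a b])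
          (Real.sqrt_nonneg _)

end Matrix

theorem energy_nonneg {n : ℕ} {A : Matrix (Fin n) (Fin n) ℂ} (hA : A.IsHermitian) :
    0 ≤ energy hA :=
  sum_nonneg fun _ _ => abs_nonneg _

theorem norm_trace_mul_le_energy_mul {n : ℕ} {A M : Matrix (Fin n) (Fin n) ℂ}
    (hA : A.IsHermitian) {c : ℝ}
    (hM : ∀ x : EuclideanSpace ℂ (Fin n), ‖star ⇑x ⬝ᵥ M *ᵥ ⇑x‖ ≤ c * ‖x‖ ^ 2) :
    ‖(A * M).trace‖ ≤ energy hA * c := by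
  rw [hA.trace_mul_eq_sum_eigenvalues_mul, energy, sum_mul]
  refine (norm_sum_le _ _).trans (sum_le_sum fun i _ => ?_)
  have hv := hM (hA.eigenvectorBasis i)
  rw [hA.eigenvectorBasis.orthonormal.1 i, one_pow, mul_one] at hv
  rw [norm_mul, RCLike.norm_ofReal]
  exact mul_le_mul_of_nonneg_left hv (abs_nonneg _)

namespace IsGainMatrix

variable {n : ℕ} {G : SimpleGraph (Fin n)} [DecidableRel G.Adj] {A : Matrix (Fin n) (Fin n) ℂ}

theorem norm_sq_apply (hA : IsGainMatrix G A) (i j : Fin n) :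
    ‖A i j‖ ^ 2 = if G.Adj i j then 1 else 0 := by
  by_cases h : G.Adj i j
  · simp [h, hA.2.1 i j h]
  · simp [h, hA.2.2 i j h]

theorem cutMass_eq_sum_degree (hA : IsGainMatrix G A) {S : Finset (Fin n)}
    (hS : G.IsIndepSet S) : cutMass A S = ∑ s ∈ S, (G.degree s : ℝ) := by
  refine sum_congr rfl fun s hs => ?_
  have hout : ∀ j ∈ S, ‖A s j‖ ^ 2 = 0 := fun j hj => by
    rw [hA.norm_sq_apply, if_neg]
    rcases eq_or_ne s j with rfl | hsj
    · exact G.loopless.irrefl s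
    · exact hS hs hj hsj
  rw [sum_subset (subset_univ Sᶜ) fun j _ hj => hout j (by simpa using hj)]
  simp [hA.norm_sq_apply, sum_boole, ← SimpleGraph.neighborFinset_eq_filter]

end IsGainMatrix

theorem energy_ge_two_minDegree_of_triangleFree_general {n : ℕ} (G : SimpleGraph (Fin n))
    [DecidableRel G.Adj] (A : Matrix (Fin n) (Fin n) ℂ) (hA : IsGainMatrix G A)
    (htf : G.CliqueFree 3) :
    (2 * G.minDegree : ℝ) ≤ energy hA.1 := by
  cases isEmpty_or_nonempty (Fin n)
  · simp [energy_nonneg]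
  obtain ⟨u, hu⟩ := G.exists_minimal_degree_vertex
  set S := G.neighborFinset u
  have hindep : G.IsIndepSet S := by
    simpa [S] using G.isIndepSet_neighborSet_of_triangleFree htf u
  have hmass : (G.minDegree : ℝ) ^ 2 ≤ cutMass A S := by
    rw [hA.cutMass_eq_sum_degree hindep]
    calc (G.minDegree : ℝ) ^ 2 = ∑ _s ∈ S, (G.minDegree : ℝ) := by
          simp [S, hu, sq]
      _ ≤ _ := sum_le_sum fun s _ => by exact_mod_cast G.minDegree_le_degree s
  have htrace : 2 * cutMass A S ≤ energy hA.1 * √(cutMass A S) := by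
    simpa [hA.1.trace_mul_cutPart, abs_of_nonneg (cutMass_nonneg A S)] using
      norm_trace_mul_le_energy_mul hA.1 (hA.1.norm_dotProduct_cutPart_mulVec_le S)
  have hδ : (G.minDegree : ℝ) ≤ √(cutMass A S) := Real.le_sqrt_of_sq_le hmass
  nlinarith [Real.sq_sqrt (cutMass_nonneg A S), energy_nonneg hA.1]

theorem energy_ge_two_minDegree_of_triangleFree {n : ℕ} (G : SimpleGraph (Fin n))
    [DecidableRel G.Adj] (A : Matrix (Fin n) (Fin n) ℂ) (hA : IsGainMatrix G A)
    (hconn : G.Connected) (htf : G.CliqueFree 3) :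
    (2 * G.minDegree : ℝ) ≤ energy hA.1 :=
  energy_ge_two_minDegree_of_triangleFree_general G A hA htf
end

section
/- Let Φ = (G, φ) be a complex unit gain graph such that Re(φ(C)) = 0 for every cycle C in G. Then the characteristic polynomial of A(Φ) equals the matching polynomial of G: det(xI − A(Φ)) = Σ_{j=0}^{⌊n/2⌋} (−1)^j m(G, j) x^{n−2j}, where m(G, j) is the number of matchings of size j in G. -/
open Matrix Polynomial BigOperators

/-- The gain of a walk: the product of the gains along its darts. -/
def walkGain {n : ℕ} {G : SimpleGraph (Fin n)} (A : Matrix (Fin n) (Fin n) ℂ)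
    {u v : Fin n} (w : G.Walk u v) : ℂ :=
  (w.darts.map fun d => A d.fst d.snd).prod

/-- The number of matchings of size `j` in `G` (sets of `j` pairwise
non-adjacent edges); `matchCount G 0 = 1`. -/
noncomputable def matchCount {n : ℕ} (G : SimpleGraph (Fin n)) (j : ℕ) : ℕ :=
  {M : Finset (Sym2 (Fin n)) | ↑M ⊆ G.edgeSet ∧
    (∀ e ∈ M, ∀ f ∈ M, e ≠ f → ∀ v : Fin n, ¬(v ∈ e ∧ v ∈ f)) ∧ M.card = j}.ncard

/-!
Expand `det (X - A)` over permutations. A permutation with a cycle of length at least three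
is paired with the permutation obtained by reversing such a cycle, chosen canonically. The two
have the same sign and support, and their weights differ only in that the weight `w` of the
reversed cycle is replaced by its conjugate. Up to conjugation, `w` is either zero or the gain
of a cycle of `G`, so `w + conj w = 0` and the pair cancels. Only involutions survive; since
`|A i j| = 1` on edges, an involution whose 2-cycles form a matching with `j` edges contributes
`(-1) ^ j X ^ (n - 2 j)`, and every other involution contributes zero.
-/

open Equiv Equiv.Perm Finset

namespace SimpleGraph

variable {α : Type*} {G : SimpleGraph α}

def iterateWalk (f : α → α) :
    (k : ℕ) → (x : α) → (∀ y ∈ List.iterate f x k, G.Adj y (f y)) → G.Walk x (f^[k] x)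
  | 0, _, _ => .nil
  | k + 1, x, h => .cons (h x List.mem_cons_self)
      (iterateWalk f k (f x) fun y hy => h y (List.mem_cons_of_mem x hy))

theorem support_iterateWalk (f : α → α) :
    ∀ (k : ℕ) (x : α) (h : ∀ y ∈ List.iterate f x k, G.Adj y (f y)),
      (iterateWalk f k x h).support = List.iterate f x (k + 1)
  | 0, _, _ => rfl
  | k + 1, x, _ => congrArg (x :: ·) (support_iterateWalk f k (f x) _)

theorem length_iterateWalk (f : α → α) :
    ∀ (k : ℕ) (x : α) (h : ∀ y ∈ List.iterate f x k, G.Adj y (f y)),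
      (iterateWalk f k x h).length = k
  | 0, _, _ => rfl
  | k + 1, x, _ => congrArg (· + 1) (length_iterateWalk f k (f x) _)

theorem darts_map_iterateWalk {β : Type*} (f : α → α) (g : α → α → β) :
    ∀ (k : ℕ) (x : α) (h : ∀ y ∈ List.iterate f x k, G.Adj y (f y)),
      (iterateWalk f k x h).darts.map (fun d => g d.fst d.snd) =
        (List.iterate f x k).map fun y => g y (f y)
  | 0, _, _ => rfl
  | k + 1, x, _ => congrArg (g x (f x) :: ·) (darts_map_iterateWalk f g k (f x) _)

def IsEdgeMatching (G : SimpleGraph α) (M : Finset (Sym2 α)) : Prop :=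
  ↑M ⊆ G.edgeSet ∧ ∀ e ∈ M, ∀ f ∈ M, e ≠ f → ∀ v : α, ¬(v ∈ e ∧ v ∈ f)

theorem IsEdgeMatching.eq_of_mk_mem {M : Finset (Sym2 α)} (hM : G.IsEdgeMatching M)
    {v w w' : α} (h : s(v, w) ∈ M) (h' : s(v, w') ∈ M) : w = w' := by
  by_contra hne
  exact hM.2 _ h _ h' (fun heq => hne (Sym2.congr_right.1 heq)) v
    ⟨Sym2.mem_mk_left _ _, Sym2.mem_mk_left _ _⟩

end SimpleGraph

open SimpleGraph

namespace Equiv.Perm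

theorem apply_apply_of_sq_eq_one {α : Type*} {σ : Perm α} (hσ : σ ^ 2 = 1) (i : α) :
    σ (σ i) = i := by
  rw [← Perm.mul_apply, ← sq, hσ, one_apply]

variable {α : Type*} [Fintype α] [DecidableEq α]

theorem sign_of_sq_eq_one {σ : Perm α} (hσ : σ ^ 2 = 1) :
    sign σ = (-1) ^ (#σ.support / 2) := by
  rw [sign_of_pow_two_eq_one hσ, card_fixedPoints, sum_cycleType,
    Nat.sub_sub_self (card_le_univ _)]

theorem IsCycle.mem_toList_iff {c : Perm α} (hc : c.IsCycle) {x y : α} (hx : x ∈ c.support) :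
    y ∈ c.toList x ↔ y ∈ c.support := by
  rw [Perm.mem_toList_iff, and_iff_left hx]
  exact ⟨fun h => h.mem_support_iff.1 hx,
    fun hy => hc.sameCycle (mem_support.1 hx) (mem_support.1 hy)⟩

theorem IsCycle.toList_eq_iterate {c : Perm α} (hc : c.IsCycle) {x : α} (hx : x ∈ c.support) :
    c.toList x = List.iterate c x #c.support := by
  rw [toList, hc.cycleOf_eq (mem_support.1 hx)]

theorem IsCycle.exists_walk_isCycle {G : SimpleGraph α} {M : Type*} [CommMonoid M]
    {c : Perm α} (hc : c.IsCycle) (h3 : 3 ≤ #c.support)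
    (hadj : ∀ i ∈ c.support, G.Adj i (c i)) (g : α → α → M) :
    ∃ (v : α) (w : G.Walk v v), w.IsCycle ∧
      (w.darts.map fun d => g d.fst d.snd).prod = ∏ i ∈ c.support, g i (c i) := by
  obtain ⟨x, hx⟩ := hc.nonempty_support
  obtain ⟨k, hk⟩ : ∃ k, #c.support = k + 1 := ⟨#c.support - 1, by omega⟩
  have hend : c^[k] (c x) = x := by
    rw [← Function.iterate_succ_apply, Nat.succ_eq_add_one, ← hk, iterate_eq_pow,
      ← hc.orderOf, pow_orderOf_eq_one, one_apply]
  have hadj' : ∀ y ∈ List.iterate c (c x) k, G.Adj y (c y) := fun y hy =>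
    hadj y ((hc.mem_toList_iff hx).1
      (by rw [hc.toList_eq_iterate hx, hk]; exact List.mem_cons_of_mem x hy))
  set p := (iterateWalk c k (c x) hadj').copy rfl hend
  have hp : p.IsPath := by
    rw [Walk.isPath_copy, Walk.isPath_def, support_iterateWalk, ← hk,
      ← hc.toList_eq_iterate (apply_mem_support.2 hx)]
    exact nodup_toList c _
  refine ⟨x, .cons (hadj x hx) p, ?_, ?_⟩
  · rw [Walk.isCycle_iff_isPath_tail_and_le_length, Walk.tail_cons]
    refine ⟨(Walk.isPath_copy _ _ _).2 hp, ?_⟩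
    rw [Walk.length_cons, Walk.length_copy, length_iterateWalk]
    omega
  · rw [Walk.darts_cons, Walk.darts_copy, List.map_cons, List.prod_cons, darts_map_iterateWalk,
      ← List.prod_cons (a := g x (c x)), ← List.map_cons (f := fun y => g y (c y))]
    change ((List.iterate c x (k + 1)).map _).prod = _
    rw [← hk, ← hc.toList_eq_iterate hx, ← List.prod_toFinset _ (nodup_toList c x)]
    congr 1
    ext y
    rw [List.mem_toFinset, hc.mem_toList_iff hx]

theorem support_sq_mul_inv_mul_inv {σ c : Perm α} (hc : c ∈ σ.cycleFactorsFinset) :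
    ((σ * c⁻¹ * c⁻¹) ^ 2).support = (σ ^ 2).support := by
  have hd := disjoint_mul_inv_of_mem_cycleFactorsFinset hc
  set d := σ * c⁻¹
  have hσ : σ = d * c := by simp [d]
  rw [hσ, hd.commute.mul_pow, hd.inv_right.commute.mul_pow,
    (hd.pow_disjoint_pow 2 2).support_mul, (hd.inv_right.pow_disjoint_pow 2 2).support_mul,
    inv_pow, support_inv]

theorem inv_mem_cycleFactorsFinset_mul_inv_mul_inv {σ c : Perm α}
    (hc : c ∈ σ.cycleFactorsFinset) : c⁻¹ ∈ (σ * c⁻¹ * c⁻¹).cycleFactorsFinset := by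
  have hd := disjoint_mul_inv_of_mem_cycleFactorsFinset hc
  rw [hd.inv_right.cycleFactorsFinset_mul_eq_union, mem_union,
    (mem_cycleFactorsFinset_iff.1 hc).1.inv.cycleFactorsFinset_eq_singleton]
  exact Or.inr (mem_singleton_self _)

section ReverseCycle

variable [LinearOrder α]

/-- `(σ ^ 2).support` is the set of points on cycles of length at least three. Reversing one of
these cycles does not change it, so reversing the cycle through its least point is an
involution. -/
def reverseCycle (σ : Perm α) : Perm α :=
  if h : (σ ^ 2).support.Nonempty then
    σ * (σ.cycleOf ((σ ^ 2).support.min' h))⁻¹ * (σ.cycleOf ((σ ^ 2).support.min' h))⁻¹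
  else σ

theorem reverseCycle_of_sq_eq_one {σ : Perm α} (h : σ ^ 2 = 1) : reverseCycle σ = σ :=
  dif_neg (by rw [not_nonempty_iff_eq_empty, support_eq_empty_iff]; exact h)

theorem reverseCycle_reverseCycle (σ : Perm α) : reverseCycle (reverseCycle σ) = σ := by
  by_cases h : (σ ^ 2).support.Nonempty
  · set m := (σ ^ 2).support.min' h
    have hm : m ∈ (σ ^ 2).support := min'_mem _ h
    have hc : σ.cycleOf m ∈ σ.cycleFactorsFinset :=
      cycleOf_mem_cycleFactorsFinset_iff.2 (support_pow_le σ 2 hm)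
    have hτ : reverseCycle σ = σ * (σ.cycleOf m)⁻¹ * (σ.cycleOf m)⁻¹ := dif_pos h
    have hsupp := support_sq_mul_inv_mul_inv hc
    rw [← hτ] at hsupp
    have hcyc : (reverseCycle σ).cycleOf m = (σ.cycleOf m)⁻¹ := by
      refine (cycle_is_cycleOf ?_ ?_).symm
      · rw [support_inv, mem_support_cycleOf_iff]
        exact ⟨SameCycle.rfl, support_pow_le σ 2 hm⟩
      · rw [hτ]
        exact inv_mem_cycleFactorsFinset_mul_inv_mul_inv hc
    rw [reverseCycle, dif_pos (hsupp ▸ h)]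
    simp only [hsupp]
    rw [show (σ ^ 2).support.min' _ = m from rfl, hcyc, hτ]
    group
  · have hτ : reverseCycle σ = σ := dif_neg h
    rw [hτ, hτ]

theorem exists_reverseCycle_eq {σ : Perm α} (h : σ ^ 2 ≠ 1) :
    ∃ c d : Perm α, c.IsCycle ∧ 3 ≤ #c.support ∧ d.Disjoint c ∧
      σ = d * c ∧ reverseCycle σ = d * c⁻¹ := by
  have hne : (σ ^ 2).support.Nonempty := by
    rwa [nonempty_iff_ne_empty, Ne, support_eq_empty_iff]
  set m := (σ ^ 2).support.min' hne
  have hm : m ∈ (σ ^ 2).support := min'_mem _ hne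
  set c := σ.cycleOf m
  have hc : c ∈ σ.cycleFactorsFinset :=
    cycleOf_mem_cycleFactorsFinset_iff.2 (support_pow_le σ 2 hm)
  have hcyc : c.IsCycle := (mem_cycleFactorsFinset_iff.1 hc).1
  refine ⟨c, σ * c⁻¹, hcyc, ?_, disjoint_mul_inv_of_mem_cycleFactorsFinset hc, by group,
    dif_pos hne⟩
  -- a cycle of length two would give `σ ^ 2` the fixed point `m`
  have h2 : #c.support ≠ 2 := fun h2 => by
    have hc2 : c ^ 2 = 1 := h2 ▸ hcyc.orderOf ▸ pow_orderOf_eq_one c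
    have := cycleOf_pow_apply_self σ m 2
    rw [hc2] at this
    exact mem_support.1 hm this.symm
  have := hcyc.two_le_card_support
  omega

theorem reverseCycle_ne_self {σ : Perm α} (h : σ ^ 2 ≠ 1) : reverseCycle σ ≠ σ := by
  obtain ⟨c, d, hc, h3, -, hσ, hτ⟩ := exists_reverseCycle_eq h
  rw [hτ, hσ, Ne, mul_right_inj, inv_eq_iff_mul_eq_one, ← sq]
  intro hc2
  have := orderOf_le_of_pow_eq_one two_pos hc2
  rw [hc.orderOf] at this
  omega

theorem sq_reverseCycle_ne_one {σ : Perm α} (h : σ ^ 2 ≠ 1) : reverseCycle σ ^ 2 ≠ 1 :=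
  fun h' => reverseCycle_ne_self h <| calc
    reverseCycle σ = reverseCycle (reverseCycle σ) := (reverseCycle_of_sq_eq_one h').symm
    _ = σ := reverseCycle_reverseCycle σ

end ReverseCycle

def movedPairs (σ : Perm α) : Finset (Sym2 α) :=
  σ.support.image fun i => s(i, σ i)

theorem mem_movedPairs_iff {σ : Perm α} (hσ : σ ^ 2 = 1) {i x : α} :
    s(i, x) ∈ σ.movedPairs ↔ i ≠ x ∧ σ i = x := by
  constructor
  · intro hmem
    obtain ⟨k, hk, he⟩ := mem_image.1 hmem
    have hk' := mem_support.1 hk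
    rcases Sym2.eq_iff.1 he with ⟨rfl, rfl⟩ | ⟨rfl, rfl⟩
    · exact ⟨fun h => hk' h.symm, rfl⟩
    · exact ⟨hk', apply_apply_of_sq_eq_one hσ k⟩
  · rintro ⟨hix, rfl⟩
    exact mem_image.2 ⟨i, mem_support.2 (Ne.symm hix), rfl⟩

theorem card_support_eq_two_mul_card_movedPairs {σ : Perm α} (hσ : σ ^ 2 = 1) :
    #σ.support = 2 * #σ.movedPairs := by
  rw [movedPairs, card_eq_sum_card_image (fun i => s(i, σ i)) σ.support, mul_comm,
    ← smul_eq_mul, ← sum_const]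
  refine sum_congr rfl fun e he => ?_
  obtain ⟨i, hi, rfl⟩ := mem_image.1 he
  have hfiber : {x ∈ σ.support | s(x, σ x) = s(i, σ i)} = {i, σ i} := by
    ext x
    simp only [mem_filter, mem_insert, mem_singleton, Sym2.eq_iff]
    constructor
    · rintro ⟨-, ⟨rfl, -⟩ | ⟨rfl, -⟩⟩ <;> simp
    · rintro (rfl | rfl)
      · exact ⟨hi, Or.inl ⟨rfl, rfl⟩⟩
      · exact ⟨apply_mem_support.2 hi, Or.inr ⟨rfl, apply_apply_of_sq_eq_one hσ i⟩⟩
  rw [hfiber, card_pair (mem_support.1 hi).symm]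

theorem movedPairs_injOn : Set.InjOn (movedPairs (α := α)) {σ | σ ^ 2 = 1} := by
  intro σ hσ τ hτ heq
  have key : ∀ {σ τ : Perm α}, σ ^ 2 = 1 → τ ^ 2 = 1 → σ.movedPairs = τ.movedPairs →
      ∀ i, σ i ≠ i → τ i = σ i := fun hσ hτ heq i hi =>
    ((mem_movedPairs_iff hτ).1 (heq ▸ (mem_movedPairs_iff hσ).2 ⟨hi.symm, rfl⟩)).2
  ext i
  by_cases hi : σ i = i
  · rw [hi]
    by_contra h
    exact h (hi.symm.trans (key hτ hσ heq.symm i (Ne.symm h)))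
  · exact (key hσ hτ heq i hi).symm

theorem isEdgeMatching_movedPairs {G : SimpleGraph α} {σ : Perm α} (hσ : σ ^ 2 = 1)
    (hadj : ∀ i ∈ σ.support, G.Adj i (σ i)) : G.IsEdgeMatching σ.movedPairs := by
  refine ⟨fun e he => ?_, fun e he f hf hef v ⟨hve, hvf⟩ => hef ?_⟩
  · obtain ⟨i, hi, rfl⟩ := mem_image.1 he
    exact hadj i hi
  · obtain ⟨a, rfl⟩ := Sym2.mem_iff_exists.1 hve
    obtain ⟨b, rfl⟩ := Sym2.mem_iff_exists.1 hvf
    rw [((mem_movedPairs_iff hσ).1 he).2.symm.trans ((mem_movedPairs_iff hσ).1 hf).2]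

theorem exists_movedPairs_eq {G : SimpleGraph α} {M : Finset (Sym2 α)}
    (hM : G.IsEdgeMatching M) :
    ∃ σ : Perm α, σ ^ 2 = 1 ∧ (∀ i ∈ σ.support, G.Adj i (σ i)) ∧
      σ.movedPairs = M := by
  let f : α → α := fun v => if h : ∃ w, s(v, w) ∈ M then h.choose else v
  have hf : ∀ v w, s(v, w) ∈ M → f v = w := fun v w h => by
    simp only [f, dif_pos (⟨w, h⟩ : ∃ w, s(v, w) ∈ M)]
    exact hM.eq_of_mk_mem (Exists.choose_spec (⟨w, h⟩ : ∃ w, s(v, w) ∈ M)) h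
  have hf' : ∀ v, (¬∃ w, s(v, w) ∈ M) → f v = v := fun v h => dif_neg h
  have hinv : Function.Involutive f := fun v => by
    by_cases h : ∃ w, s(v, w) ∈ M
    · obtain ⟨w, hw⟩ := h
      rw [hf v w hw, hf w v (Sym2.eq_swap ▸ hw)]
    · rw [hf' v h, hf' v h]
  have hσ : hinv.toPerm ^ 2 = 1 := Equiv.ext hinv
  have hmem : ∀ i x, s(i, x) ∈ M ↔ s(i, x) ∈ hinv.toPerm.movedPairs := fun i x => by
    rw [mem_movedPairs_iff hσ, Function.Involutive.coe_toPerm]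
    refine ⟨fun h => ⟨G.ne_of_adj (hM.1 h), hf i x h⟩, fun ⟨hix, hfx⟩ => ?_⟩
    by_cases h : ∃ w, s(i, w) ∈ M
    · obtain ⟨w, hw⟩ := h
      rwa [← hfx, hf i w hw]
    · exact absurd (hfx ▸ hf' i h).symm hix
  refine ⟨hinv.toPerm, hσ, fun i hi => hM.1 ((hmem i _).2 ?_), ?_⟩
  · exact mem_image_of_mem _ hi
  · ext e
    induction e using Sym2.ind with
    | h i x => exact (hmem i x).symm

end Equiv.Perm

namespace SimpleGraph

variable {α : Type*} [Fintype α] [DecidableEq α] (G : SimpleGraph α) [DecidableRel G.Adj]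

def matchingInvolutions : Finset (Perm α) :=
  {σ | σ ^ 2 = 1 ∧ ∀ i ∈ σ.support, G.Adj i (σ i)}

variable {G} in
theorem mem_matchingInvolutions {σ : Perm α} :
    σ ∈ G.matchingInvolutions ↔ σ ^ 2 = 1 ∧ ∀ i ∈ σ.support, G.Adj i (σ i) := by
  rw [matchingInvolutions, mem_filter, and_iff_right (mem_univ σ)]

theorem ncard_isEdgeMatching_eq (j : ℕ) :
    {M | G.IsEdgeMatching M ∧ #M = j}.ncard =
      #{σ ∈ G.matchingInvolutions | #σ.support / 2 = j} := by
  rw [← Set.ncard_coe_finset]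
  symm
  refine Set.ncard_congr (fun σ _ => σ.movedPairs) (fun σ hσ => ?_) (fun σ τ hσ hτ => ?_)
    (fun M ⟨hM, hMj⟩ => ?_)
  · simp only [coe_filter, mem_matchingInvolutions, Set.mem_ofPred_eq] at hσ ⊢
    refine ⟨isEdgeMatching_movedPairs hσ.1.1 hσ.1.2, ?_⟩
    rw [← hσ.2, card_support_eq_two_mul_card_movedPairs hσ.1.1,
      Nat.mul_div_cancel_left _ two_pos]
  · simp only [coe_filter, mem_matchingInvolutions, Set.mem_ofPred_eq] at hσ hτ
    exact movedPairs_injOn hσ.1.1 hτ.1.1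
  · obtain ⟨σ, hσ, hadj, rfl⟩ := exists_movedPairs_eq hM
    refine ⟨σ, ?_, rfl⟩
    simp only [coe_filter, mem_matchingInvolutions, Set.mem_ofPred_eq]
    rw [card_support_eq_two_mul_card_movedPairs hσ, Nat.mul_div_cancel_left _ two_pos]
    exact ⟨⟨hσ, hadj⟩, hMj⟩

end SimpleGraph

namespace Matrix

variable {α : Type*} [Fintype α] [DecidableEq α]

def permWeight {R : Type*} [CommMonoid R] (A : Matrix α α R) (σ : Perm α) : R :=
  ∏ i ∈ σ.support, A (σ i) i

theorem permWeight_mul_of_disjoint {R : Type*} [CommMonoid R] (A : Matrix α α R)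
    {σ τ : Perm α} (h : σ.Disjoint τ) :
    permWeight A (σ * τ) = permWeight A σ * permWeight A τ := by
  rw [permWeight, h.support_mul, prod_union h.disjoint_support]
  congr 1 <;> refine prod_congr rfl fun i hi => ?_
  · rw [Perm.mul_apply, notMem_support.1 (disjoint_left.1 h.disjoint_support hi)]
  · rw [Perm.mul_apply, notMem_support.1
      (disjoint_right.1 h.disjoint_support (apply_mem_support.2 hi))]

theorem permWeight_inv {R : Type*} [CommSemiring R] [StarRing R] {A : Matrix α α R}
    (hA : A.IsHermitian) (σ : Perm α) : permWeight A σ⁻¹ = star (permWeight A σ) := by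
  rw [permWeight, permWeight, support_inv, star_prod]
  exact (σ.prod_comp' _ (fun i j => A j i) fun a ha => mem_support.2 ha).symm.trans
    (prod_congr rfl fun i _ => (hA.apply i (σ i)).symm)

variable {R : Type*} [CommRing R]

/-- The term of `σ` in the Leibniz expansion of `det (X • 1 - A)` when `A` has zero diagonal. -/
noncomputable def permTerm (A : Matrix α α R) (σ : Perm α) : R[X] :=
  C ((sign σ : ℤ) * (-1) ^ #σ.support * permWeight A σ) * X ^ (Fintype.card α - #σ.support)

theorem charpoly_eq_sum_permTerm {A : Matrix α α R} (hA : ∀ i, A i i = 0) :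
    A.charpoly = ∑ σ : Perm α, permTerm A σ := by
  rw [charpoly, det_apply]
  refine sum_congr rfl fun σ _ => ?_
  have hmoved :
      ∏ i ∈ σ.support, charmatrix A (σ i) i = ∏ i ∈ σ.support, -C (A (σ i) i) :=
    prod_congr rfl fun i hi => charmatrix_apply_ne _ _ _ (mem_support.1 hi)
  have hfixed :
      ∏ i ∈ σ.supportᶜ, charmatrix A (σ i) i = X ^ (Fintype.card α - #σ.support) := by
    rw [prod_congr rfl fun i hi => by
      rw [notMem_support.1 (mem_compl.1 hi), charmatrix_apply_eq, hA, map_zero, sub_zero],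
      prod_const, card_compl]
  rw [← prod_mul_prod_compl σ.support, hmoved, hfixed, prod_neg, ← map_prod, permTerm,
    permWeight, Units.smul_def, zsmul_eq_mul]
  simp only [map_mul, map_pow, map_neg, map_one, map_intCast]
  ring

end Matrix

namespace IsGainMatrix

variable {n : ℕ} {G : SimpleGraph (Fin n)} {A : Matrix (Fin n) (Fin n) ℂ}

theorem permWeight_eq_zero (hA : IsGainMatrix G A) {σ : Perm (Fin n)} {i : Fin n}
    (hi : i ∈ σ.support) (hni : ¬G.Adj i (σ i)) : permWeight A σ = 0 :=
  prod_eq_zero hi (hA.2.2 _ _ fun h => hni h.symm)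

theorem permWeight_eq_one [DecidableRel G.Adj] (hA : IsGainMatrix G A)
    {σ : Perm (Fin n)} (hσ : σ ∈ G.matchingInvolutions) : permWeight A σ = 1 := by
  obtain ⟨hσ, hadj⟩ := mem_matchingInvolutions.1 hσ
  refine prod_involution (fun i _ => σ i) (fun i hi => ?_) (fun i hi _ => mem_support.1 hi)
    (fun i hi => apply_mem_support.2 hi) (fun i _ => apply_apply_of_sq_eq_one hσ i)
  rw [apply_apply_of_sq_eq_one hσ, ← hA.1.apply, Complex.star_def, Complex.conj_mul',
    hA.2.1 _ _ (hadj i hi)]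
  norm_num

theorem permTerm_of_mem_matchingInvolutions [DecidableRel G.Adj] (hA : IsGainMatrix G A)
    {σ : Perm (Fin n)} (hσ : σ ∈ G.matchingInvolutions) :
    permTerm A σ = C ((-1) ^ (#σ.support / 2)) * X ^ (n - #σ.support) := by
  have hsq := (mem_matchingInvolutions.1 hσ).1
  obtain ⟨j, hj⟩ := two_dvd_card_support hsq
  rw [permTerm, hA.permWeight_eq_one hσ, sign_of_sq_eq_one hsq, Fintype.card_fin, hj,
    Nat.mul_div_cancel_left _ two_pos, pow_mul]
  simp

theorem re_permWeight_eq_zero (hA : IsGainMatrix G A)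
    (hcyc : ∀ (v : Fin n) (c : G.Walk v v), c.IsCycle → (walkGain A c).re = 0)
    {c : Perm (Fin n)} (hc : c.IsCycle) (h3 : 3 ≤ #c.support) : (permWeight A c).re = 0 := by
  by_cases hadj : ∀ i ∈ c.support, G.Adj i (c i)
  · obtain ⟨v, w, hw, hgain⟩ := hc.exists_walk_isCycle h3 hadj A
    have hconj : permWeight A c = star (walkGain A w) := by
      rw [walkGain, hgain, star_prod]
      exact prod_congr rfl fun i _ => (hA.1.apply (c i) i).symm
    rw [hconj, Complex.star_def, Complex.conj_re]
    exact hcyc v w hw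
  · obtain ⟨i, hi, hni⟩ := not_forall₂.1 hadj
    rw [hA.permWeight_eq_zero hi hni, Complex.zero_re]

/-- Reversing a cycle conjugates its weight, which is purely imaginary. -/
theorem permTerm_add_permTerm_reverseCycle (hA : IsGainMatrix G A)
    (hcyc : ∀ (v : Fin n) (c : G.Walk v v), c.IsCycle → (walkGain A c).re = 0)
    {σ : Perm (Fin n)} (hσ : σ ^ 2 ≠ 1) :
    permTerm A σ + permTerm A (reverseCycle σ) = 0 := by
  obtain ⟨c, d, hc, h3, hdc, rfl, hτ⟩ := exists_reverseCycle_eq hσ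
  have hw : permWeight A c + star (permWeight A c) = 0 := by
    rw [Complex.star_def, Complex.add_conj, hA.re_permWeight_eq_zero hcyc hc h3]
    simp
  rw [hτ, permTerm, permTerm, hdc.inv_right.support_mul, hdc.support_mul, support_inv,
    Perm.sign_mul, Perm.sign_mul, sign_inv, permWeight_mul_of_disjoint A hdc.inv_right,
    permWeight_mul_of_disjoint A hdc, permWeight_inv hA.1, ← add_mul, ← C_add, ← mul_add,
    ← mul_add, hw, mul_zero, mul_zero, C_0, zero_mul]

theorem sum_permTerm_eq_sum_filter_sq_eq_one (hA : IsGainMatrix G A)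
    (hcyc : ∀ (v : Fin n) (c : G.Walk v v), c.IsCycle → (walkGain A c).re = 0) :
    ∑ σ : Perm (Fin n), permTerm A σ = ∑ σ with σ ^ 2 = 1, permTerm A σ := by
  rw [← sum_filter_add_sum_filter_not univ (fun σ : Perm (Fin n) => σ ^ 2 = 1), add_eq_left]
  refine sum_involution (fun σ _ => reverseCycle σ)
    (fun σ hσ => hA.permTerm_add_permTerm_reverseCycle hcyc (mem_filter.1 hσ).2)
    (fun σ hσ _ => reverseCycle_ne_self (mem_filter.1 hσ).2)
    (fun σ hσ => mem_filter.2 ⟨mem_univ _, sq_reverseCycle_ne_one (mem_filter.1 hσ).2⟩)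
    (fun σ _ => reverseCycle_reverseCycle σ)

theorem sum_filter_sq_eq_one_permTerm [DecidableRel G.Adj] (hA : IsGainMatrix G A) :
    ∑ σ with σ ^ 2 = 1, permTerm A σ =
      ∑ σ ∈ G.matchingInvolutions, C ((-1) ^ (#σ.support / 2)) * X ^ (n - #σ.support) := by
  have hsub : G.matchingInvolutions ⊆ ({σ | σ ^ 2 = 1} : Finset (Perm (Fin n))) := fun σ hσ =>
    mem_filter.2 ⟨mem_univ σ, (mem_matchingInvolutions.1 hσ).1⟩
  rw [← sum_subset hsub fun σ hσ hnot => ?_]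
  · exact sum_congr rfl fun σ hσ => hA.permTerm_of_mem_matchingInvolutions hσ
  · have hσ := (mem_filter.1 hσ).2
    obtain ⟨i, hi, hni⟩ :=
      not_forall₂.1 fun hadj => hnot (mem_matchingInvolutions.2 ⟨hσ, hadj⟩)
    rw [permTerm, hA.permWeight_eq_zero hi hni, mul_zero, C_0, zero_mul]

end IsGainMatrix

theorem matchCount_eq_card_matchingInvolutions {n : ℕ} (G : SimpleGraph (Fin n))
    [DecidableRel G.Adj] (j : ℕ) :
    matchCount G j = #{σ ∈ G.matchingInvolutions | #σ.support / 2 = j} := by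
  rw [← G.ncard_isEdgeMatching_eq, matchCount]
  simp only [IsEdgeMatching, and_assoc]

/-- If all cycles of `G` have gain with zero real part, the characteristic
polynomial of the gain adjacency matrix equals the matching polynomial of `G`. -/
theorem charpoly_eq_matchingPolynomial {n : ℕ} (G : SimpleGraph (Fin n))
    (A : Matrix (Fin n) (Fin n) ℂ) (hA : IsGainMatrix G A)
    (hcyc : ∀ (v : Fin n) (c : G.Walk v v), c.IsCycle → (walkGain A c).re = 0) :
    A.charpoly = ∑ j ∈ Finset.range (n / 2 + 1),
      Polynomial.C ((-1 : ℂ) ^ j * (matchCount G j : ℂ)) * Polynomial.X ^ (n - 2 * j) := by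
  classical
  have hdiag : ∀ i, A i i = 0 := fun i => hA.2.2 i i G.irrefl
  have hrange : ∀ σ ∈ G.matchingInvolutions, #σ.support / 2 ∈ range (n / 2 + 1) := by
    intro σ _
    have hcard := card_le_univ σ.support
    rw [Fintype.card_fin] at hcard
    exact mem_range.2 (Nat.lt_succ_of_le (Nat.div_le_div_right hcard))
  rw [charpoly_eq_sum_permTerm hdiag, hA.sum_permTerm_eq_sum_filter_sq_eq_one hcyc,
    hA.sum_filter_sq_eq_one_permTerm, ← sum_fiberwise_of_maps_to hrange]
  refine sum_congr rfl fun j _ => ?_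
  have hterm : ∀ σ ∈ {σ ∈ G.matchingInvolutions | #σ.support / 2 = j},
      C ((-1 : ℂ) ^ (#σ.support / 2)) * X ^ (n - #σ.support) =
        C ((-1) ^ j) * X ^ (n - 2 * j) := by
    intro σ hσ
    obtain ⟨hmem, rfl⟩ := mem_filter.1 hσ
    rw [Nat.mul_div_cancel' (two_dvd_card_support (mem_matchingInvolutions.1 hmem).1)]
  rw [sum_congr rfl hterm, sum_const, ← matchCount_eq_card_matchingInvolutions, nsmul_eq_mul,
    ← C_eq_natCast, C_mul]
  ring
end

section
/- Let X = [[Y, A],[B, Z]] be a complex block matrix where Y and Z are square blocks. Then the sum of singular values of X is at least the sum of singular values of Y, with equality if and only if A, B, and Z are all zero matrices. -/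
open Matrix
open scoped ComplexOrder

/-- The trace norm (sum of singular values) of a complex square matrix:
the trace of `(M Mᴴ)^(1/2)`. -/
noncomputable def traceNorm {ι : Type*} [Fintype ι] [DecidableEq ι]
    (M : Matrix ι ι ℂ) : ℝ :=
  (((Matrix.posSemidef_self_mul_conjTranspose M).1.eigenvectorUnitary.1 *
      diagonal (((↑) : ℝ → ℂ) ∘ (√·) ∘ (Matrix.posSemidef_self_mul_conjTranspose M).1.eigenvalues) *
      (star (Matrix.posSemidef_self_mul_conjTranspose M).1.eigenvectorUnitary :
        Matrix ι ι ℂ)).trace).re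

/-!
The trace norm is dual to the spectral norm: `Re tr (C M) ≤ ‖C‖ ‖M‖₁` for every `C`, with
equality for the contraction `C_M = Mᴴ (M Mᴴ)^(-1/2)`. Testing `X = [[Y, A], [B, Z]]` against
`diag(C_Y, C_Z)` gives `‖Y‖₁ + ‖Z‖₁ ≤ ‖X‖₁`, which is strict when `Z ≠ 0`. Testing it against
`[[a C_Y, 0], [b E, 0]]`, where `a = ‖Y‖₁`, `E = Aᴴ / ‖A‖` and `b = Re tr (E A) > 0`, a matrix of
norm at most `√(a² + b²)`, gives `√(a² + b²) ≤ ‖X‖₁`, so `A ≠ 0` also makes the inequality strict;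
`B` is handled by passing to `Xᴴ`.
-/

open scoped Matrix.Norms.L2Operator InnerProductSpace
open WithLp

namespace Matrix

variable {𝕜 ι κ ι₁ ι₂ κ₁ κ₂ : Type*} [RCLike 𝕜] [Fintype ι] [Fintype κ]
  [Fintype ι₁] [Fintype ι₂] [Fintype κ₁] [Fintype κ₂]

lemma trace_fromBlocks {α : Type*} [AddCommMonoid α] (P : Matrix ι₁ ι₁ α) (Q : Matrix ι₁ ι₂ α)
    (R : Matrix ι₂ ι₁ α) (S : Matrix ι₂ ι₂ α) :
    (fromBlocks P Q R S).trace = P.trace + S.trace := by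
  simp [trace, Fintype.sum_sum_type]

lemma inner_toLp_mulVec (N : Matrix ι κ 𝕜) (x : EuclideanSpace 𝕜 ι) (y : κ → 𝕜) :
    ⟪x, toLp 2 (N *ᵥ y)⟫_𝕜 = ⟪toLp 2 (Nᴴ *ᵥ x), toLp 2 y⟫_𝕜 := by
  simp only [EuclideanSpace.inner_eq_star_dotProduct, star_mulVec, conjTranspose_conjTranspose]
  rw [dotProduct_comm, dotProduct_mulVec, dotProduct_comm]

lemma norm_toLp_sumElim_sq (u : ι₁ → 𝕜) (v : ι₂ → 𝕜) :
    ‖toLp 2 (Sum.elim u v)‖ ^ 2 = ‖toLp 2 u‖ ^ 2 + ‖toLp 2 v‖ ^ 2 := by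
  simp [EuclideanSpace.norm_sq_eq, Fintype.sum_sum_type]

lemma re_trace_conjTranspose_mul_self_pos {N : Matrix κ ι ℂ} (hN : N ≠ 0) :
    0 < (Nᴴ * N).trace.re :=
  (Complex.pos_iff.1 <| (posSemidef_conjTranspose_mul_self N).trace_nonneg.lt_of_ne' <|
    mt trace_conjTranspose_mul_self_eq_zero_iff.1 hN).1

variable [DecidableEq ι] [DecidableEq ι₁] [DecidableEq ι₂]

lemma trace_eq_sum_inner (N : Matrix ι ι 𝕜) (b : OrthonormalBasis ι 𝕜 (EuclideanSpace 𝕜 ι)) :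
    N.trace = ∑ i, ⟪b i, toLp 2 (N *ᵥ b i)⟫_𝕜 := by
  rw [← trace_toLin_eq N (EuclideanSpace.basisFun ι 𝕜).toBasis,
    ← toEuclideanLin_eq_toLin_orthonormal, LinearMap.trace_eq_sum_inner _ b]
  rfl

lemma sq_norm_toLp_mulVec_le (N : Matrix κ ι 𝕜) (x : ι → 𝕜) :
    ‖toLp 2 (N *ᵥ x)‖ ^ 2 ≤ ‖N‖ ^ 2 * ‖toLp 2 x‖ ^ 2 := by
  rw [← mul_pow]
  exact pow_le_pow_left₀ (norm_nonneg _) (l2_opNorm_mulVec N (toLp 2 x)) 2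

lemma l2_opNorm_le_of_forall_sq_le {N : Matrix κ ι 𝕜} {c : ℝ} (hc : 0 ≤ c)
    (h : ∀ x : ι → 𝕜, ‖toLp 2 (N *ᵥ x)‖ ^ 2 ≤ c ^ 2 * ‖toLp 2 x‖ ^ 2) : ‖N‖ ≤ c :=
  ContinuousLinearMap.opNorm_le_bound _ hc fun x =>
    (sq_le_sq₀ (norm_nonneg _) (by positivity)).1 ((h x).trans_eq (mul_pow _ _ _).symm)

lemma l2_opNorm_fromBlocks_zero₁₂_zero₂₁_le (P : Matrix κ₁ ι₁ 𝕜) (Q : Matrix κ₂ ι₂ 𝕜) :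
    ‖fromBlocks P 0 0 Q‖ ≤ max ‖P‖ ‖Q‖ := by
  refine l2_opNorm_le_of_forall_sq_le (le_max_of_le_left (norm_nonneg _)) fun x => ?_
  obtain ⟨u, v, rfl⟩ : ∃ u v, x = Sum.elim u v := ⟨_, _, (Sum.elim_comp_inl_inr x).symm⟩
  rw [fromBlocks_mulVec, norm_toLp_sumElim_sq, norm_toLp_sumElim_sq]
  simp only [Sum.elim_comp_inl, Sum.elim_comp_inr, zero_mulVec, add_zero, zero_add]
  have hP : ‖P‖ ^ 2 ≤ max ‖P‖ ‖Q‖ ^ 2 := pow_le_pow_left₀ (norm_nonneg _) (le_max_left _ _) 2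
  have hQ : ‖Q‖ ^ 2 ≤ max ‖P‖ ‖Q‖ ^ 2 := pow_le_pow_left₀ (norm_nonneg _) (le_max_right _ _) 2
  nlinarith [sq_norm_toLp_mulVec_le P u, sq_norm_toLp_mulVec_le Q v,
    sq_nonneg ‖toLp 2 u‖, sq_nonneg ‖toLp 2 v‖]

lemma l2_opNorm_fromBlocks_zero₁₂_zero₂₂_le (P : Matrix κ₁ ι₁ 𝕜) (E : Matrix κ₂ ι₁ 𝕜) :
    ‖fromBlocks P 0 E (0 : Matrix κ₂ ι₂ 𝕜)‖ ≤ √(‖P‖ ^ 2 + ‖E‖ ^ 2) := by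
  refine l2_opNorm_le_of_forall_sq_le (Real.sqrt_nonneg _) fun x => ?_
  obtain ⟨u, v, rfl⟩ : ∃ u v, x = Sum.elim u v := ⟨_, _, (Sum.elim_comp_inl_inr x).symm⟩
  rw [fromBlocks_mulVec, norm_toLp_sumElim_sq, norm_toLp_sumElim_sq,
    Real.sq_sqrt (by positivity)]
  simp only [Sum.elim_comp_inl, Sum.elim_comp_inr, zero_mulVec, add_zero]
  nlinarith [sq_norm_toLp_mulVec_le P u, sq_norm_toLp_mulVec_le E u, sq_nonneg ‖toLp 2 v‖,
    sq_nonneg ‖P‖, sq_nonneg ‖E‖]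

lemma l2_opNorm_toBlocks₁₁_le (C : Matrix (κ₁ ⊕ κ₂) (ι₁ ⊕ ι₂) 𝕜) : ‖C.toBlocks₁₁‖ ≤ ‖C‖ := by
  refine l2_opNorm_le_of_forall_sq_le (norm_nonneg _) fun x => ?_
  have hC : C *ᵥ Sum.elim x 0 = Sum.elim (C.toBlocks₁₁ *ᵥ x) (C.toBlocks₂₁ *ᵥ x) := by
    conv_lhs => rw [← fromBlocks_toBlocks C]
    simp [fromBlocks_mulVec]
  have h := sq_norm_toLp_mulVec_le C (Sum.elim x 0)
  rw [hC, norm_toLp_sumElim_sq, norm_toLp_sumElim_sq] at h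
  simp only [WithLp.toLp_zero, norm_zero] at h
  nlinarith [sq_nonneg ‖toLp 2 (C.toBlocks₂₁ *ᵥ x)‖]

namespace IsHermitian

variable {A : Matrix ι ι 𝕜} (hA : A.IsHermitian)

lemma cfc_id : hA.cfc id = A := hA.spectral_theorem.symm

lemma cfc_mul_cfc (f g : ℝ → ℝ) : hA.cfc f * hA.cfc g = hA.cfc (f * g) := by
  simp only [IsHermitian.cfc, ← map_mul, diagonal_mul_diagonal]
  congr with i
  simp

lemma trace_cfc (f : ℝ → ℝ) : (hA.cfc f).trace = ∑ i, (f (hA.eigenvalues i) : 𝕜) := by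
  simp [IsHermitian.cfc, trace_mul_cycle]

lemma l2_opNorm_cfc_le {f : ℝ → ℝ} {c : ℝ} (hc : 0 ≤ c)
    (hf : ∀ i, |f (hA.eigenvalues i)| ≤ c) : ‖hA.cfc f‖ ≤ c := by
  rw [IsHermitian.cfc, Unitary.conjStarAlgAut_apply, mul_assoc, CStarRing.norm_coe_unitary_mul,
    ← Unitary.coe_star, CStarRing.norm_mul_coe_unitary, l2_opNorm_diagonal]
  refine (pi_norm_le_iff_of_nonneg hc).2 fun i => ?_
  simpa using hf i

end IsHermitian

end Matrix

section TraceNorm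

variable {m n : Type*} [Fintype m] [Fintype n] [DecidableEq m] [DecidableEq n]

lemma traceNorm_eq_sum_sqrt_eigenvalues (M : Matrix m m ℂ) :
    traceNorm M = ∑ i, √((posSemidef_self_mul_conjTranspose M).1.eigenvalues i) := by
  change ((posSemidef_self_mul_conjTranspose M).1.cfc Real.sqrt).trace.re = _
  simp [IsHermitian.trace_cfc]

lemma traceNorm_nonneg (M : Matrix m m ℂ) : 0 ≤ traceNorm M := by
  rw [traceNorm_eq_sum_sqrt_eigenvalues]
  positivity

lemma norm_toLp_conjTranspose_mulVec_eigenvectorBasis (M : Matrix m m ℂ) (i : m) :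
    ‖toLp 2 (Mᴴ *ᵥ (posSemidef_self_mul_conjTranspose M).1.eigenvectorBasis i)‖ =
      √((posSemidef_self_mul_conjTranspose M).1.eigenvalues i) := by
  set hH := (posSemidef_self_mul_conjTranspose M).1
  have hsq : ‖toLp 2 (Mᴴ *ᵥ hH.eigenvectorBasis i)‖ ^ 2 = hH.eigenvalues i := by
    rw [← inner_self_eq_norm_sq (𝕜 := ℂ), ← inner_toLp_mulVec, mulVec_mulVec,
      hH.mulVec_eigenvectorBasis]
    simp
  rw [← hsq, Real.sqrt_sq (norm_nonneg _)]

lemma re_trace_mul_le_l2_opNorm_mul_traceNorm (C M : Matrix m m ℂ) :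
    (C * M).trace.re ≤ ‖C‖ * traceNorm M := by
  set b := (posSemidef_self_mul_conjTranspose M).1.eigenvectorBasis
  have htrace : (C * M).trace = ∑ i, ⟪toLp 2 (Mᴴ *ᵥ b i), toLp 2 (C *ᵥ b i)⟫_ℂ := by
    rw [trace_mul_comm, trace_eq_sum_inner _ b]
    simp only [← mulVec_mulVec, inner_toLp_mulVec]
  rw [htrace, Complex.re_sum, traceNorm_eq_sum_sqrt_eigenvalues, Finset.mul_sum]
  gcongr with i
  calc _ ≤ ‖⟪toLp 2 (Mᴴ *ᵥ b i), toLp 2 (C *ᵥ b i)⟫_ℂ‖ := Complex.re_le_norm _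
    _ ≤ ‖toLp 2 (Mᴴ *ᵥ b i)‖ * ‖toLp 2 (C *ᵥ b i)‖ := norm_inner_le_norm _ _
    _ ≤ √((posSemidef_self_mul_conjTranspose M).1.eigenvalues i) * (‖C‖ * 1) := by
      rw [norm_toLp_conjTranspose_mulVec_eigenvectorBasis]
      gcongr
      simpa [b.norm_eq_one] using l2_opNorm_mulVec C (b i)
    _ = ‖C‖ * √((posSemidef_self_mul_conjTranspose M).1.eigenvalues i) := by ring

lemma exists_l2_opNorm_le_one_re_trace_mul_eq_traceNorm (M : Matrix m m ℂ) :
    ∃ C : Matrix m m ℂ, ‖C‖ ≤ 1 ∧ (C * M).trace.re = traceNorm M := by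
  set hH := (posSemidef_self_mul_conjTranspose M).1
  -- `g 0 = 0⁻¹ = 0`, so `Cᴴ C` is the spectral projection of `M Mᴴ` onto its nonzero eigenvalues.
  set g : ℝ → ℝ := fun x => (√x)⁻¹
  have hG : (hH.cfc g)ᴴ = hH.cfc g := by rw [← hH.cfc_eq]; exact cfc_predicate g (M * Mᴴ)
  refine ⟨Mᴴ * hH.cfc g, ?_, ?_⟩
  · have hCC : (Mᴴ * hH.cfc g)ᴴ * (Mᴴ * hH.cfc g) = hH.cfc (g * id * g) := by
      rw [← hH.cfc_mul_cfc, ← hH.cfc_mul_cfc, hH.cfc_id, conjTranspose_mul,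
        conjTranspose_conjTranspose, hG]
      simp only [Matrix.mul_assoc]
    have hle : ‖Mᴴ * hH.cfc g‖ * ‖Mᴴ * hH.cfc g‖ ≤ 1 := by
      rw [← l2_opNorm_conjTranspose_mul_self, hCC]
      refine hH.l2_opNorm_cfc_le zero_le_one fun i => ?_
      have hx := (posSemidef_self_mul_conjTranspose M).eigenvalues_nonneg i
      simp only [Pi.mul_apply, id, g]
      rw [abs_of_nonneg (by positivity), mul_comm, ← mul_assoc, ← mul_inv,
        Real.mul_self_sqrt hx, ← div_eq_inv_mul]
      exact div_self_le_one _
    nlinarith [norm_nonneg (Mᴴ * hH.cfc g)]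
  · have hMG : M * Mᴴ * hH.cfc g = hH.cfc (id * g) := by rw [← hH.cfc_mul_cfc, hH.cfc_id]
    rw [trace_mul_cycle, hMG, hH.trace_cfc, traceNorm_eq_sum_sqrt_eigenvalues, Complex.re_sum]
    refine Finset.sum_congr rfl fun i _ => ?_
    simp only [Pi.mul_apply, id, g, ← div_eq_mul_inv, Real.div_sqrt]
    exact Complex.ofReal_re _

lemma re_trace_mul_le_traceNorm {C M : Matrix m m ℂ} (hC : ‖C‖ ≤ 1) :
    (C * M).trace.re ≤ traceNorm M :=
  (re_trace_mul_le_l2_opNorm_mul_traceNorm C M).trans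
    (mul_le_of_le_one_left (traceNorm_nonneg M) hC)

lemma traceNorm_le_traceNorm_conjTranspose (M : Matrix m m ℂ) : traceNorm M ≤ traceNorm Mᴴ := by
  obtain ⟨C, hC, hCM⟩ := exists_l2_opNorm_le_one_re_trace_mul_eq_traceNorm M
  calc traceNorm M = (Cᴴ * Mᴴ).trace.re := by
        rw [← hCM, ← conjTranspose_mul, trace_conjTranspose, Complex.star_def, Complex.conj_re,
          trace_mul_comm]
    _ ≤ traceNorm Mᴴ := re_trace_mul_le_traceNorm ((l2_opNorm_conjTranspose C).trans_le hC)

lemma traceNorm_conjTranspose (M : Matrix m m ℂ) : traceNorm Mᴴ = traceNorm M :=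
  le_antisymm (by simpa using traceNorm_le_traceNorm_conjTranspose Mᴴ)
    (traceNorm_le_traceNorm_conjTranspose M)

lemma exists_l2_opNorm_le_one_re_trace_mul_pos {N : Matrix m n ℂ} (hN : N ≠ 0) :
    ∃ E : Matrix n m ℂ, ‖E‖ ≤ 1 ∧ 0 < (E * N).trace.re := by
  have hN' : 0 < ‖N‖ := norm_pos_iff.2 hN
  refine ⟨((‖N‖⁻¹ : ℝ) : ℂ) • Nᴴ, ?_, ?_⟩
  · rw [norm_smul, l2_opNorm_conjTranspose, Complex.norm_real, Real.norm_of_nonneg (by positivity),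
      inv_mul_cancel₀ hN'.ne']
  · rw [Matrix.smul_mul, trace_smul, smul_eq_mul, Complex.re_ofReal_mul]
    exact mul_pos (inv_pos.2 hN') (re_trace_conjTranspose_mul_self_pos hN)

lemma traceNorm_pos {M : Matrix m m ℂ} (hM : M ≠ 0) : 0 < traceNorm M :=
  pos_of_mul_pos_right ((re_trace_conjTranspose_mul_self_pos hM).trans_le
    (re_trace_mul_le_l2_opNorm_mul_traceNorm Mᴴ M)) (norm_nonneg _)

end TraceNorm

section Blocks

variable {m n : Type*} [Fintype m] [Fintype n] [DecidableEq m] [DecidableEq n]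
  (Y : Matrix m m ℂ) (A : Matrix m n ℂ) (B : Matrix n m ℂ) (Z : Matrix n n ℂ)

lemma traceNorm_add_traceNorm_le_traceNorm_fromBlocks :
    traceNorm Y + traceNorm Z ≤ traceNorm (fromBlocks Y A B Z) := by
  obtain ⟨C, hC, hCY⟩ := exists_l2_opNorm_le_one_re_trace_mul_eq_traceNorm Y
  obtain ⟨W, hW, hWZ⟩ := exists_l2_opNorm_le_one_re_trace_mul_eq_traceNorm Z
  calc traceNorm Y + traceNorm Z = (fromBlocks C 0 0 W * fromBlocks Y A B Z).trace.re := by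
        simp [fromBlocks_multiply, trace_fromBlocks, hCY, hWZ]
    _ ≤ traceNorm (fromBlocks Y A B Z) :=
        re_trace_mul_le_traceNorm ((l2_opNorm_fromBlocks_zero₁₂_zero₂₁_le C W).trans (max_le hC hW))

lemma traceNorm_fromBlocks_zero :
    traceNorm (fromBlocks Y 0 0 (0 : Matrix n n ℂ)) = traceNorm Y := by
  refine le_antisymm ?_ ?_
  · obtain ⟨C, hC, hCX⟩ := exists_l2_opNorm_le_one_re_trace_mul_eq_traceNorm
      (fromBlocks Y 0 0 (0 : Matrix n n ℂ))
    calc traceNorm (fromBlocks Y 0 0 0) = (C.toBlocks₁₁ * Y).trace.re := by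
          rw [← hCX]
          conv_lhs => rw [← fromBlocks_toBlocks C]
          simp [fromBlocks_multiply, trace_fromBlocks]
      _ ≤ traceNorm Y := re_trace_mul_le_traceNorm ((l2_opNorm_toBlocks₁₁_le C).trans hC)
  · linarith [traceNorm_add_traceNorm_le_traceNorm_fromBlocks Y 0 0 (0 : Matrix n n ℂ),
      traceNorm_nonneg (0 : Matrix n n ℂ)]

variable {Y A B Z}

lemma traceNorm_lt_traceNorm_fromBlocks_of_ne_zero₁₂ (hA : A ≠ 0) :
    traceNorm Y < traceNorm (fromBlocks Y A B Z) := by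
  obtain ⟨C, hC, hCY⟩ := exists_l2_opNorm_le_one_re_trace_mul_eq_traceNorm Y
  obtain ⟨E, hE, hEA⟩ := exists_l2_opNorm_le_one_re_trace_mul_pos hA
  set a := traceNorm Y
  set b := (E * A).trace.re
  have ha : 0 ≤ a := traceNorm_nonneg Y
  set r := √(a ^ 2 + b ^ 2)
  have hr : 0 < r := Real.sqrt_pos.2 (by positivity)
  set D := fromBlocks ((a : ℂ) • C) 0 ((b : ℂ) • E) (0 : Matrix n n ℂ)
  have hD : ‖D‖ ≤ r := by
    refine (l2_opNorm_fromBlocks_zero₁₂_zero₂₂_le _ _).trans (Real.sqrt_le_sqrt ?_)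
    rw [norm_smul, norm_smul, Complex.norm_real, Complex.norm_real, Real.norm_of_nonneg ha,
      Real.norm_of_nonneg hEA.le]
    gcongr <;> nlinarith [norm_nonneg C, norm_nonneg E]
  have hDX : (D * fromBlocks Y A B Z).trace.re = r * r := by
    rw [Real.mul_self_sqrt (by positivity)]
    simp only [D, fromBlocks_multiply, trace_fromBlocks, Matrix.smul_mul, Matrix.zero_mul,
      add_zero, trace_smul, smul_eq_mul, Complex.add_re, Complex.re_ofReal_mul, hCY, b, sq]
  calc a < r := (Real.lt_sqrt ha).2 (by nlinarith)
    _ ≤ traceNorm (fromBlocks Y A B Z) := by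
      refine le_of_mul_le_mul_left ?_ hr
      calc r * r = (D * fromBlocks Y A B Z).trace.re := hDX.symm
        _ ≤ ‖D‖ * traceNorm (fromBlocks Y A B Z) := re_trace_mul_le_l2_opNorm_mul_traceNorm _ _
        _ ≤ r * traceNorm (fromBlocks Y A B Z) := by gcongr; exact traceNorm_nonneg _

lemma traceNorm_lt_traceNorm_fromBlocks_of_ne_zero₂₁ (hB : B ≠ 0) :
    traceNorm Y < traceNorm (fromBlocks Y A B Z) := by
  rw [← traceNorm_conjTranspose (fromBlocks Y A B Z), fromBlocks_conjTranspose,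
    ← traceNorm_conjTranspose Y]
  exact traceNorm_lt_traceNorm_fromBlocks_of_ne_zero₁₂ (by simpa using hB)

lemma traceNorm_lt_traceNorm_fromBlocks_of_ne_zero₂₂ (hZ : Z ≠ 0) :
    traceNorm Y < traceNorm (fromBlocks Y A B Z) := by
  linarith [traceNorm_add_traceNorm_le_traceNorm_fromBlocks Y A B Z, traceNorm_pos hZ]

end Blocks

/-- For a block matrix `X = [[Y, A], [B, Z]]` with square diagonal blocks, the sum
of singular values of `X` is at least that of `Y`, with equality iff `A`, `B`, `Z`
are all zero. -/
theorem traceNorm_fromBlocks_ge {m k : ℕ}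
    (Y : Matrix (Fin m) (Fin m) ℂ) (A : Matrix (Fin m) (Fin k) ℂ)
    (B : Matrix (Fin k) (Fin m) ℂ) (Z : Matrix (Fin k) (Fin k) ℂ) :
    traceNorm Y ≤ traceNorm (Matrix.fromBlocks Y A B Z) ∧
      (traceNorm (Matrix.fromBlocks Y A B Z) = traceNorm Y ↔
        A = 0 ∧ B = 0 ∧ Z = 0) := by
  refine ⟨by linarith [traceNorm_add_traceNorm_le_traceNorm_fromBlocks Y A B Z,
    traceNorm_nonneg Z], fun h => ⟨?_, ?_, ?_⟩, ?_⟩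
  · by_contra hA
    exact (traceNorm_lt_traceNorm_fromBlocks_of_ne_zero₁₂ hA).ne' h
  · by_contra hB
    exact (traceNorm_lt_traceNorm_fromBlocks_of_ne_zero₂₁ hB).ne' h
  · by_contra hZ
    exact (traceNorm_lt_traceNorm_fromBlocks_of_ne_zero₂₂ hZ).ne' h
  · rintro ⟨rfl, rfl, rfl⟩
    exact traceNorm_fromBlocks_zero Y
end

section
/- Let Φ = (G, φ) be a complex unit gain graph on a connected bipartite graph G. Then A(Φ) has exactly one positive eigenvalue if and only if Φ is balanced and G is a complete bipartite graph. -/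
open Matrix BigOperators

/-- The gain graph is balanced: every cycle has gain `1`. -/
def IsBalanced {n : ℕ} (G : SimpleGraph (Fin n)) (A : Matrix (Fin n) (Fin n) ℂ) : Prop :=
  ∀ (v : Fin n) (c : G.Walk v v), c.IsCycle → walkGain A c = 1

/-- `G` is a complete bipartite graph with (nonempty) parts `s` and `sᶜ`. -/
def IsCompleteBipartite {n : ℕ} (G : SimpleGraph (Fin n)) : Prop :=
  ∃ s : Set (Fin n), s.Nonempty ∧ sᶜ.Nonempty ∧
    ∀ u v : Fin n, G.Adj u v ↔ (u ∈ s ↔ v ∉ s)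

/-!
Conjugating `A` by the `±1` diagonal matrix of a 2-colouring turns it into `-A`, so the spectrum
is symmetric and `rank A = 2 · #{positive eigenvalues}`; the claim becomes
`rank A = 2 ↔ balanced ∧ complete bipartite`. For `x₁, x₂` in one colour class and `y₁, y₂` in
the other, the principal submatrix on `x₁, x₂, y₁, y₂` has determinant `|A x₁ y₁ A x₂ y₂ -
A x₁ y₂ A x₂ y₁|²`. Hence `rank A < 4` forces every path `x ~ y ~ z ~ t` to close up (`x ~ t`),
which makes a connected bipartite graph complete bipartite, and forces these minors to vanish,
which produces a potential `g` with `A i j = g i * conj (g j)` on edges, so every cycle has gain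
`1`. Conversely, in a balanced complete bipartite gain graph the minors vanish because 4-cycles
have gain `1`; the potential then factors `A` through `ℂ²`, so `0 < rank A ≤ 2`.
-/

open ComplexConjugate

namespace Matrix

variable {ι : Type*} [Fintype ι]

section Spectrum

variable [DecidableEq ι]

theorem charpoly_neg_eq_of_apply_eq_zero_of_mem_iff {R : Type*} [CommRing R] {A : Matrix ι ι R}
    (s : Set ι) (hs : ∀ i j, (i ∈ s ↔ j ∈ s) → A i j = 0) : (-A).charpoly = A.charpoly := by
  classical
  let D : Matrix ι ι R := diagonal fun i => if i ∈ s then 1 else -1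
  have hDD : D * D = 1 := by
    rw [diagonal_mul_diagonal, ← diagonal_one]
    congr 1; ext i; split_ifs <;> simp
  have hDAD : D * A * D = -A := by
    ext i j
    by_cases hi : i ∈ s <;> by_cases hj : j ∈ s <;> simp [D, hi, hj, hs i j]
  rw [← hDAD, charpoly_mul_comm, ← mul_assoc, hDD, one_mul]

namespace IsHermitian

variable {𝕜 : Type*} [RCLike 𝕜] {A : Matrix ι ι 𝕜} (hA : A.IsHermitian)
include hA

theorem map_neg_eigenvalues_of_charpoly_neg (h : (-A).charpoly = A.charpoly) :
    Finset.univ.val.map (fun i => -hA.eigenvalues i) = Finset.univ.val.map hA.eigenvalues := by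
  have hneg : (-A).charpoly.roots =
      Finset.univ.val.map (RCLike.ofReal ∘ fun i => -hA.eigenvalues i) := by
    rw [← cfc_neg_id (R := ℝ) A hA.isSelfAdjoint, hA.charpoly_cfc_eq, Polynomial.roots_prod]
    · simp
    · simp [Finset.prod_ne_zero_iff, Polynomial.X_add_C_ne_zero]
  rw [h, hA.roots_charpoly_eq_eigenvalues, ← Multiset.map_map, ← Multiset.map_map] at hneg
  exact (Multiset.map_injective RCLike.ofReal_injective hneg).symm

theorem card_pos_eigenvalues_eq_card_neg_of_charpoly_neg (h : (-A).charpoly = A.charpoly) :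
    (Finset.univ.filter fun i => 0 < hA.eigenvalues i).card
      = (Finset.univ.filter fun i => hA.eigenvalues i < 0).card := by
  have := congrArg (Multiset.countP (0 < ·)) (hA.map_neg_eigenvalues_of_charpoly_neg h)
  simp only [Multiset.countP_map, neg_pos] at this
  exact this.symm

theorem rank_eq_two_mul_card_pos_eigenvalues_of_charpoly_neg (h : (-A).charpoly = A.charpoly) :
    A.rank = 2 * (Finset.univ.filter fun i => 0 < hA.eigenvalues i).card := by
  rw [hA.rank_eq_card_non_zero_eigs, Fintype.card_subtype, two_mul]
  nth_rw 2 [hA.card_pos_eigenvalues_eq_card_neg_of_charpoly_neg h]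
  rw [← Finset.card_union_of_disjoint (Finset.disjoint_filter.2 fun i _ h h' => h.not_gt h'),
    ← Finset.filter_or]
  congr 1
  ext i
  simpa only [Finset.mem_filter, Finset.mem_univ, true_and] using ne_iff_lt_or_gt.trans or_comm

end IsHermitian

end Spectrum

theorem card_le_rank_of_det_submatrix_ne_zero {K m n k : Type*} [Field K] [Fintype n]
    [Fintype k] [DecidableEq k] (A : Matrix m n K) (r : k → m) (c : k → n)
    (h : (A.submatrix r c).det ≠ 0) : Fintype.card k ≤ A.rank := by
  rw [← rank_of_isUnit _ ((isUnit_iff_isUnit_det _).2 h.isUnit)]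
  exact rank_submatrix_le A r c

theorem one_le_rank_of_apply_ne_zero {K m n : Type*} [Field K] [Fintype n] {A : Matrix m n K}
    {i : m} {j : n} (h : A i j ≠ 0) : 1 ≤ A.rank := by
  simpa using card_le_rank_of_det_submatrix_ne_zero A (fun _ : Fin 1 => i) (fun _ => j)
    (by simpa using h)

theorem IsHermitian.mul_eq_mul_of_rank_lt_four {K : Type*} [Field K] [StarRing K]
    {A : Matrix ι ι K} (hA : A.IsHermitian) (s : Set ι) (hs : ∀ i j, (i ∈ s ↔ j ∈ s) → A i j = 0)
    {x₁ x₂ y₁ y₂ : ι} (hx₁ : x₁ ∈ s) (hx₂ : x₂ ∈ s) (hy₁ : y₁ ∉ s) (hy₂ : y₂ ∉ s)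
    (hr : A.rank < 4) : A x₁ y₁ * A x₂ y₂ = A x₁ y₂ * A x₂ y₁ := by
  set a := A x₁ y₁
  set b := A x₁ y₂
  set c := A x₂ y₁
  set d := A x₂ y₂
  have hsub : A.submatrix ![x₁, x₂, y₁, y₂] ![x₁, x₂, y₁, y₂] =
      !![0, 0, a, b; 0, 0, c, d; star a, star c, 0, 0; star b, star d, 0, 0] := by
    ext i j
    fin_cases i <;> fin_cases j <;> simp [a, b, c, d, hs, hx₁, hx₂, hy₁, hy₂, hA.apply]
  have hdet : (A.submatrix ![x₁, x₂, y₁, y₂] ![x₁, x₂, y₁, y₂]).det =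
      (a * d - b * c) * star (a * d - b * c) := by
    rw [hsub]
    simp [det_succ_row_zero, Fin.sum_univ_succ, Fin.succAbove]
    ring
  by_contra hne
  have h4 : 4 ≤ A.rank := by
    simpa using card_le_rank_of_det_submatrix_ne_zero (k := Fin 4) A _ _
      (hdet ▸ mul_ne_zero (sub_ne_zero.2 hne) (star_ne_zero.2 (sub_ne_zero.2 hne)))
  omega

end Matrix

namespace SimpleGraph

variable {V : Type*} {G : SimpleGraph V}

theorem Coloring.eq_iff_ne_of_adj (C : G.Coloring (Fin 2)) (c : Fin 2) {u v : V}
    (h : G.Adj u v) : C u = c ↔ C v ≠ c := by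
  have := C.valid h
  omega

theorem Connected.adj_of_color_ne (hG : G.Connected) (C : G.Coloring (Fin 2))
    (hclose : ∀ ⦃x y z t⦄, G.Adj x y → G.Adj y z → G.Adj z t → G.Adj x t) {u v : V}
    (huv : C u ≠ C v) : G.Adj u v := by
  obtain ⟨w⟩ := hG.preconnected u v
  suffices ∀ {a b} (p : G.Walk a b),
      (C a ≠ C b → G.Adj a b) ∧ (C a = C b → ∀ x, G.Adj x a → G.Adj x b) from (this w).1 huv
  intro a b p
  induction p with
  | nil => exact ⟨fun h => absurd rfl h, fun _ _ h => h⟩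
  | @cons a c b hac p ih =>
    have := C.valid hac
    exact ⟨fun h => ih.2 (by omega) a hac, fun h x hxa => hclose hxa hac (ih.1 (by omega))⟩

end SimpleGraph

theorem Complex.mul_conj_eq_one {z : ℂ} (h : ‖z‖ = 1) : z * conj z = 1 := by
  rw [← Complex.inv_eq_conj h, mul_inv_cancel₀ (norm_ne_zero_iff.1 (h ▸ one_ne_zero))]

theorem isCompleteBipartite_of_coloring {n : ℕ} {G : SimpleGraph (Fin n)} (C : G.Coloring (Fin 2))
    (hadj : ∀ u v, C u ≠ C v → G.Adj u v) {a b : Fin n} (hab : G.Adj a b) :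
    IsCompleteBipartite G := by
  refine ⟨{i | C i = C a}, ⟨a, rfl⟩, ⟨b, (C.valid hab).symm⟩, fun u v => ⟨C.eq_iff_ne_of_adj _, ?_⟩⟩
  intro h
  apply hadj
  simp only [Set.mem_ofPred_eq] at h
  omega

section GainGraph

variable {n : ℕ} {G : SimpleGraph (Fin n)} {A : Matrix (Fin n) (Fin n) ℂ}

theorem walkGain_cons {u v w : Fin n} (h : G.Adj u v) (p : G.Walk v w) :
    walkGain A (.cons h p) = A u v * walkGain A p := by
  simp [walkGain]

theorem walkGain_eq_of_potential {g : Fin n → ℂ} (hg : ∀ i, ‖g i‖ = 1)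
    (hAg : ∀ i j, G.Adj i j → A i j = g i * conj (g j)) {u v : Fin n} (w : G.Walk u v) :
    walkGain A w = g u * conj (g v) := by
  induction w with
  | nil => simp [walkGain, Complex.mul_conj_eq_one (hg _)]
  | @cons u v w h p ih =>
    rw [walkGain_cons, ih, hAg u v h]
    linear_combination (g u * conj (g w)) * Complex.mul_conj_eq_one (hg v)

theorem isBalanced_of_potential {g : Fin n → ℂ} (hg : ∀ i, ‖g i‖ = 1)
    (hAg : ∀ i j, G.Adj i j → A i j = g i * conj (g j)) : IsBalanced G A := fun v c _ => by
  rw [walkGain_eq_of_potential hg hAg c, Complex.mul_conj_eq_one (hg v)]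

theorem IsBalanced.gain_four_cycle (hbal : IsBalanced G A) {x y x' y' : Fin n}
    (h₁ : G.Adj x y) (h₂ : G.Adj y x') (h₃ : G.Adj x' y') (h₄ : G.Adj y' x)
    (hx : x ≠ x') (hy : y ≠ y') : A x y * A y x' * A x' y' * A y' x = 1 := by
  have hc : (SimpleGraph.Walk.cons h₁ (.cons h₂ (.cons h₃ (.cons h₄ .nil)))).IsCycle := by
    simp [SimpleGraph.Walk.cons_isCycle_iff, SimpleGraph.Walk.cons_isPath_iff, h₁.ne, h₂.ne,
      h₃.ne, h₄.ne, h₁.ne.symm, h₄.ne.symm, hx, hy, hx.symm]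
  simpa [walkGain, mul_assoc] using hbal x _ hc

namespace IsGainMatrix

variable (hA : IsGainMatrix G A)
include hA

theorem apply_ne_zero {i j : Fin n} (h : G.Adj i j) : A i j ≠ 0 := by
  intro h0
  simpa [h0] using hA.2.1 i j h

theorem mul_conj_eq_one {i j : Fin n} (h : G.Adj i j) : A i j * conj (A i j) = 1 :=
  Complex.mul_conj_eq_one (hA.2.1 i j h)

theorem exists_adj_of_rank_ne_zero (hr : A.rank ≠ 0) : ∃ i j, G.Adj i j := by
  by_contra! h
  exact hr (by rw [show A = 0 from Matrix.ext fun i j => hA.2.2 i j (h i j), Matrix.rank_zero])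

theorem apply_eq_zero_of_mem_iff {s : Set (Fin n)} (hs : ∀ u v, G.Adj u v → (u ∈ s ↔ v ∉ s))
    (i j : Fin n) (hij : i ∈ s ↔ j ∈ s) : A i j = 0 :=
  hA.2.2 i j fun h => by have := hs i j h; tauto

theorem adj_of_adj_of_adj_of_adj (C : G.Coloring (Fin 2)) (hr : A.rank < 4) ⦃x y z t : Fin n⦄
    (hxy : G.Adj x y) (hyz : G.Adj y z) (hzt : G.Adj z t) : G.Adj x t := by
  by_contra hxt
  have := C.valid hxy; have := C.valid hyz; have := C.valid hzt
  have hminor := hA.1.mul_eq_mul_of_rank_lt_four {i | C i = C x}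
    (hA.apply_eq_zero_of_mem_iff fun u v => C.eq_iff_ne_of_adj _) (x₁ := x) (x₂ := z)
    (y₁ := y) (y₂ := t) rfl (by change C z = C x; omega) (by change C y ≠ C x; omega)
    (by change C t ≠ C x; omega) hr
  rw [hA.2.2 x t hxt, zero_mul] at hminor
  exact mul_ne_zero (hA.apply_ne_zero hxy) (hA.apply_ne_zero hzt) hminor

variable {s : Set (Fin n)} (hs : ∀ u v, G.Adj u v ↔ (u ∈ s ↔ v ∉ s))
include hs

theorem mul_eq_mul_of_isBalanced (hbal : IsBalanced G A) {x₁ x₂ y₁ y₂ : Fin n}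
    (hx₁ : x₁ ∈ s) (hx₂ : x₂ ∈ s) (hy₁ : y₁ ∉ s) (hy₂ : y₂ ∉ s) :
    A x₁ y₁ * A x₂ y₂ = A x₁ y₂ * A x₂ y₁ := by
  rcases eq_or_ne x₁ x₂ with rfl | hx
  · ring
  rcases eq_or_ne y₁ y₂ with rfl | hy
  · ring
  have hcross : ∀ x y, x ∈ s → y ∉ s → G.Adj x y := fun x y hx hy => (hs x y).2 (iff_of_true hx hy)
  have hgain := hbal.gain_four_cycle (hcross _ _ hx₁ hy₁) (hcross _ _ hx₂ hy₁).symm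
    (hcross _ _ hx₂ hy₂) (hcross _ _ hx₁ hy₂).symm hx hy
  rw [← hA.1.apply y₁ x₂, ← hA.1.apply y₂ x₁] at hgain
  simp only [Complex.star_def] at hgain
  linear_combination (A x₁ y₂ * A x₂ y₁) * hgain
    - (A x₁ y₁ * A x₂ y₂ * A x₁ y₂ * conj (A x₁ y₂)) * hA.mul_conj_eq_one (hcross _ _ hx₂ hy₁)
    - (A x₁ y₁ * A x₂ y₂) * hA.mul_conj_eq_one (hcross _ _ hx₁ hy₂)

theorem exists_potential {x₀ y₀ : Fin n} (hx₀ : x₀ ∈ s) (hy₀ : y₀ ∉ s)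
    (hminor : ∀ x y, x ∈ s → y ∉ s → A x y * A x₀ y₀ = A x y₀ * A x₀ y) :
    ∃ g : Fin n → ℂ, (∀ i, ‖g i‖ = 1) ∧ ∀ i j, G.Adj i j → A i j = g i * conj (g j) := by
  classical
  have hcross : ∀ x y, x ∈ s → y ∉ s → G.Adj x y := fun x y hx hy => (hs x y).2 (iff_of_true hx hy)
  have hfactor : ∀ x y, x ∈ s → y ∉ s → A x y = A x y₀ * conj (A x₀ y₀) * A x₀ y := by
    intro x y hx hy
    linear_combination conj (A x₀ y₀) * hminor x y hx hy
      - A x y * hA.mul_conj_eq_one (hcross _ _ hx₀ hy₀)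
  refine ⟨fun i => if i ∈ s then A i y₀ * conj (A x₀ y₀) else conj (A x₀ i), fun i => ?_,
    fun i j hij => ?_⟩
  · by_cases hi : i ∈ s
    · simp [hi, hA.2.1 _ _ (hcross _ _ hi hy₀), hA.2.1 _ _ (hcross _ _ hx₀ hy₀)]
    · simp [hi, hA.2.1 _ _ (hcross _ _ hx₀ hi)]
  · by_cases hi : i ∈ s
    · have hj : j ∉ s := ((hs i j).1 hij).1 hi
      simpa [hi, hj] using hfactor i j hi hj
    · have hj : j ∈ s := by have := (hs i j).1 hij; tauto
      rw [← hA.1.apply i j, hfactor j i hj hi]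
      simp [hi, hj]
      ring

theorem rank_le_two_of_potential {g : Fin n → ℂ}
    (hAg : ∀ i j, G.Adj i j → A i j = g i * conj (g j)) : A.rank ≤ 2 := by
  classical
  have hfac : A = (Matrix.of fun i (k : Fin 2) => if (i ∈ s ↔ k = 0) then g i else 0) *
      Matrix.of fun (k : Fin 2) j => if (j ∈ s ↔ k = 0) then 0 else conj (g j) := by
    ext i j
    by_cases hij : G.Adj i j
    · have hi := (hs i j).1 hij
      rw [hAg i j hij]
      by_cases i ∈ s <;> simp_all [Matrix.mul_apply]
    · have hi := (hs i j).not.1 hij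
      rw [hA.2.2 i j hij]
      by_cases i ∈ s <;> simp_all [Matrix.mul_apply]
  rw [hfac]
  exact (Matrix.rank_mul_le_right _ _).trans ((Matrix.rank_le_card_height _).trans (by simp))

end IsGainMatrix

end GainGraph

/-- A gain graph on a connected bipartite graph has exactly one positive
eigenvalue iff it is balanced and the underlying graph is complete bipartite. -/
theorem one_positive_eigenvalue_iff {n : ℕ} (G : SimpleGraph (Fin n))
    (hconn : G.Connected) (hbip : G.Colorable 2)
    (A : Matrix (Fin n) (Fin n) ℂ) (hA : IsGainMatrix G A) :
    (Finset.univ.filter fun i => 0 < hA.1.eigenvalues i).card = 1 ↔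
      IsBalanced G A ∧ IsCompleteBipartite G := by
  obtain ⟨C⟩ := hbip
  have hrank := hA.1.rank_eq_two_mul_card_pos_eigenvalues_of_charpoly_neg
    (charpoly_neg_eq_of_apply_eq_zero_of_mem_iff _
      (hA.apply_eq_zero_of_mem_iff fun u v => C.eq_iff_ne_of_adj 0))
  constructor
  · intro hpos
    obtain ⟨a, b, hab⟩ := hA.exists_adj_of_rank_ne_zero (by omega)
    have hCB := isCompleteBipartite_of_coloring C
      (fun _ _ => hconn.adj_of_color_ne C (hA.adj_of_adj_of_adj_of_adj C (by omega))) hab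
    refine ⟨?_, hCB⟩
    obtain ⟨s, ⟨x₀, hx₀⟩, ⟨y₀, hy₀⟩, hs⟩ := hCB
    obtain ⟨g, hg, hAg⟩ := hA.exists_potential hs hx₀ hy₀ fun x y hx hy =>
      hA.1.mul_eq_mul_of_rank_lt_four s (hA.apply_eq_zero_of_mem_iff fun u v => (hs u v).1)
        hx hx₀ hy hy₀ (by omega)
    exact isBalanced_of_potential hg hAg
  · rintro ⟨hbal, s, ⟨x₀, hx₀⟩, ⟨y₀, hy₀⟩, hs⟩
    obtain ⟨g, hg, hAg⟩ := hA.exists_potential hs hx₀ hy₀ fun x y hx hy =>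
      hA.mul_eq_mul_of_isBalanced hs hbal hx hx₀ hy hy₀
    have h2 := hA.rank_le_two_of_potential hs hAg
    have h1 := Matrix.one_le_rank_of_apply_ne_zero
      (hA.apply_ne_zero ((hs x₀ y₀).2 (iff_of_true hx₀ hy₀)))
    omega
end

section
/- Let Φ₁ = (G, φ₁) and Φ₂ = (G, φ₂) be two complex unit gain graphs on the same simple graph G whose cycles are pairwise vertex-disjoint, and suppose Re(φ₁(C)) = 0 = Re(φ₂(C)) for every cycle C of G. Then Φ₁ and Φ₂ are equienergetic: E(Φ₁) = E(Φ₂). -/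
open Matrix BigOperators

/-!
Expand `det (X - A)` over permutations `σ`. If `σ` has a cycle of length at least 3, reversing
that cycle keeps the sign of `σ` and its fixed points, and replaces the product of the entries of
`A` along the cycle by its complex conjugate. That product is the gain of a cycle of `G` (or `0`,
when the cycle leaves `G`), so it is purely imaginary and the two terms cancel. What is left are
the involutions, whose terms only involve `A (σ j) j * A j (σ j) = ‖A j (σ j)‖ ^ 2`, which is `1`
on edges of `G` and `0` elsewhere. So the characteristic polynomial, hence the spectrum, depends
only on `G`.
-/

open scoped Finset

def HasPurelyImaginaryCycleGains {n : ℕ} (G : SimpleGraph (Fin n))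
    (A : Matrix (Fin n) (Fin n) ℂ) : Prop :=
  ∀ (v : Fin n) (c : G.Walk v v), c.IsCycle → (walkGain A c).re = 0

namespace SimpleGraph.Walk

variable {V : Type*} {G : SimpleGraph V} {f : V → V} {s : Set V}

def ofIterate (hf : ∀ v ∈ s, f v ∈ s) (hadj : ∀ v ∈ s, G.Adj v (f v)) :
    (k : ℕ) → (x : V) → x ∈ s → G.Walk x (f^[k] x)
  | 0, _, _ => nil
  | k + 1, x, hx => cons (hadj x hx) (ofIterate hf hadj k (f x) (hf x hx))

variable (hf : ∀ v ∈ s, f v ∈ s) (hadj : ∀ v ∈ s, G.Adj v (f v))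

theorem support_ofIterate (k : ℕ) (x : V) (hx : x ∈ s) :
    (ofIterate hf hadj k x hx).support = List.iterate f x (k + 1) := by
  induction k generalizing x with
  | zero => rfl
  | succ k ih => exact congrArg (x :: ·) (ih (f x) (hf x hx))

theorem length_ofIterate (k : ℕ) (x : V) (hx : x ∈ s) :
    (ofIterate hf hadj k x hx).length = k := by
  induction k generalizing x with
  | zero => rfl
  | succ k ih => exact congrArg (· + 1) (ih (f x) (hf x hx))

theorem map_toProd_darts_ofIterate (k : ℕ) (x : V) (hx : x ∈ s) :
    (ofIterate hf hadj k x hx).darts.map Dart.toProd =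
      (List.iterate f x k).map fun v => (v, f v) := by
  induction k generalizing x with
  | zero => rfl
  | succ k ih => exact congrArg ((x, f x) :: ·) (ih (f x) (hf x hx))

end SimpleGraph.Walk

namespace Equiv.Perm

variable {α : Type*} {σ : Perm α} {x j : α}

theorem apply_ne_self_of_apply_apply_ne_self (hx : σ (σ x) ≠ x) : σ x ≠ x :=
  fun h => hx (by rw [h, h])

variable [Fintype α] [DecidableEq α]

theorem mem_support_sq_iff : x ∈ (σ ^ 2).support ↔ σ (σ x) ≠ x := by
  rw [mem_support, sq, mul_apply]

theorem support_sq_nonempty_iff : (σ ^ 2).support.Nonempty ↔ σ ^ 2 ≠ 1 := by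
  rw [Finset.nonempty_iff_ne_empty, ne_eq, support_eq_empty_iff]

theorem cycleOf_apply_of_mem_support (hj : j ∈ (σ.cycleOf x).support) :
    σ.cycleOf x j = σ j :=
  (mem_support_cycleOf_iff.mp hj).1.cycleOf_apply

theorem apply_mem_support_cycleOf_iff :
    σ j ∈ (σ.cycleOf x).support ↔ j ∈ (σ.cycleOf x).support := by
  simp only [mem_support_cycleOf_iff, sameCycle_apply_right]

theorem three_le_card_support_cycleOf (hx : σ (σ x) ≠ x) : 3 ≤ #(σ.cycleOf x).support := by
  have hx₁ := apply_ne_self_of_apply_apply_ne_self hx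
  have mem (k : ℕ) : (σ ^ k) x ∈ (σ.cycleOf x).support :=
    mem_support_cycleOf_iff.mpr ⟨⟨k, rfl⟩, mem_support.mpr hx₁⟩
  refine Finset.two_lt_card.mpr ⟨x, by simpa using mem 0, σ x, by simpa using mem 1,
    σ (σ x), by simpa [sq] using mem 2, hx₁.symm, hx.symm, ?_⟩
  exact fun h => hx₁ (σ.injective h).symm

theorem pow_card_support_cycleOf_apply_self (σ : Perm α) (x : α) :
    (σ ^ #(σ.cycleOf x).support) x = x := by
  simpa using (pow_mod_card_support_cycleOf_self_apply σ #(σ.cycleOf x).support x).symm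

/-- Replaces the cycle `c = σ.cycleOf x` of `σ` by `c⁻¹`. -/
def reverseCycleOf (σ : Perm α) (x : α) : Perm α := σ * (σ.cycleOf x)⁻¹ ^ 2

theorem reverseCycleOf_apply_of_mem (hj : j ∈ (σ.cycleOf x).support) :
    σ.reverseCycleOf x j = (σ.cycleOf x)⁻¹ j := by
  have hj' : ((σ.cycleOf x)⁻¹ ^ 2) j ∈ (σ.cycleOf x).support := by
    rwa [← support_inv, pow_apply_mem_support, support_inv]
  rw [reverseCycleOf, mul_apply, ← cycleOf_apply_of_mem_support hj', sq, mul_apply]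
  simp only [coe_inv, apply_symm_apply]

theorem reverseCycleOf_apply_of_notMem (hj : j ∉ (σ.cycleOf x).support) :
    σ.reverseCycleOf x j = σ j := by
  rw [← support_inv, notMem_support] at hj
  rw [reverseCycleOf, mul_apply, pow_apply_eq_self_of_apply_eq_self hj]

theorem sign_reverseCycleOf : sign (σ.reverseCycleOf x) = sign σ := by
  rw [reverseCycleOf, map_mul, map_pow, sq, Int.units_mul_self, mul_one]

theorem reverseCycleOf_apply_apply_eq_self_iff :
    σ.reverseCycleOf x (σ.reverseCycleOf x j) = j ↔ σ (σ j) = j := by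
  by_cases hj : j ∈ (σ.cycleOf x).support
  · have hj' : (σ.cycleOf x)⁻¹ j ∈ (σ.cycleOf x).support := by
      rwa [← support_inv, apply_mem_support, support_inv]
    rw [reverseCycleOf_apply_of_mem hj, reverseCycleOf_apply_of_mem hj', inv_eq_iff_eq,
      inv_eq_iff_eq, cycleOf_apply_of_mem_support hj,
      cycleOf_apply_of_mem_support (apply_mem_support_cycleOf_iff.mpr hj), eq_comm]
  · rw [reverseCycleOf_apply_of_notMem hj,
      reverseCycleOf_apply_of_notMem (apply_mem_support_cycleOf_iff.not.mpr hj)]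

theorem support_sq_reverseCycleOf : (σ.reverseCycleOf x ^ 2).support = (σ ^ 2).support := by
  ext j
  simp only [mem_support, sq, mul_apply, ne_eq, reverseCycleOf_apply_apply_eq_self_iff]

theorem reverseCycleOf_ne_self (hx : σ (σ x) ≠ x) : σ.reverseCycleOf x ≠ σ := by
  have hx' : x ∈ (σ.cycleOf x).support := by
    rw [mem_support, cycleOf_apply_self]
    exact apply_ne_self_of_apply_apply_ne_self hx
  intro h
  have hx'' := congrArg (· x) h
  simp only [reverseCycleOf_apply_of_mem hx', inv_eq_iff_eq] at hx''
  rw [cycleOf_apply_of_mem_support (apply_mem_support_cycleOf_iff.mpr hx')] at hx''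
  exact hx hx''.symm

theorem cycleOf_reverseCycleOf (hx : σ x ≠ x) :
    (σ.reverseCycleOf x).cycleOf x = (σ.cycleOf x)⁻¹ := by
  have hcomm : Commute (σ.cycleOf x) σ :=
    self_mem_cycle_factors_commute (cycleOf_mem_cycleFactorsFinset_iff.mpr (mem_support.mpr hx))
  have hfix : ((σ.cycleOf x)⁻¹ * σ) x = x := by
    rw [mul_apply, inv_eq_iff_eq, cycleOf_apply_self]
  have hsplit : σ.reverseCycleOf x = (σ.cycleOf x)⁻¹ * ((σ.cycleOf x)⁻¹ * σ) := by
    rw [reverseCycleOf, ← mul_assoc, ← sq, (hcomm.inv_left.pow_left 2).eq]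
  rw [hsplit, cycleOf_mul_of_apply_right_eq_self ((Commute.refl _).mul_right hcomm.inv_left) x hfix]
  refine (isCycle_cycleOf σ hx).inv.cycleOf_eq ?_
  rwa [ne_eq, inv_eq_iff_eq, cycleOf_apply_self, eq_comm]

theorem reverseCycleOf_reverseCycleOf (hx : σ x ≠ x) :
    (σ.reverseCycleOf x).reverseCycleOf x = σ := by
  rw [reverseCycleOf, cycleOf_reverseCycleOf hx, reverseCycleOf, inv_inv, mul_assoc, inv_pow,
    inv_mul_cancel, mul_one]

section LinearOrder

variable [LinearOrder α]

/-- The points moved by `σ ^ 2` are those on cycles of `σ` of length at least 3. -/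
def reverseLeastLongCycle (σ : Perm α) : Perm α :=
  if h : (σ ^ 2).support.Nonempty then σ.reverseCycleOf ((σ ^ 2).support.min' h) else σ

theorem reverseLeastLongCycle_eq (h : (σ ^ 2).support.Nonempty) :
    σ.reverseLeastLongCycle = σ.reverseCycleOf ((σ ^ 2).support.min' h) :=
  dif_pos h

theorem support_sq_reverseLeastLongCycle :
    (σ.reverseLeastLongCycle ^ 2).support = (σ ^ 2).support := by
  unfold reverseLeastLongCycle
  split_ifs
  · exact support_sq_reverseCycleOf
  · rfl

theorem reverseLeastLongCycle_reverseLeastLongCycle :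
    σ.reverseLeastLongCycle.reverseLeastLongCycle = σ := by
  by_cases h : (σ ^ 2).support.Nonempty
  · have hx := mem_support_sq_iff.mp ((σ ^ 2).support.min'_mem h)
    have h' : (σ.reverseLeastLongCycle ^ 2).support.Nonempty := by
      rwa [support_sq_reverseLeastLongCycle]
    have hmin : (σ.reverseLeastLongCycle ^ 2).support.min' h' = (σ ^ 2).support.min' h := by
      congr 1
      exact support_sq_reverseLeastLongCycle
    rw [reverseLeastLongCycle_eq h', hmin, reverseLeastLongCycle_eq h]
    exact reverseCycleOf_reverseCycleOf (apply_ne_self_of_apply_apply_ne_self hx)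
  · have hσ : σ.reverseLeastLongCycle = σ := dif_neg h
    rw [hσ, hσ]

theorem reverseLeastLongCycle_ne_self (hσ : σ ^ 2 ≠ 1) : σ.reverseLeastLongCycle ≠ σ := by
  have h := support_sq_nonempty_iff.mpr hσ
  rw [reverseLeastLongCycle_eq h]
  exact reverseCycleOf_ne_self (mem_support_sq_iff.mp ((σ ^ 2).support.min'_mem h))

theorem sign_reverseLeastLongCycle : sign σ.reverseLeastLongCycle = sign σ := by
  unfold reverseLeastLongCycle
  split_ifs
  · exact sign_reverseCycleOf
  · rfl

end LinearOrder

end Equiv.Perm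

open Polynomial in
theorem Matrix.prod_charmatrix_apply_of_ne {R m : Type*} [CommRing R] [Fintype m]
    [DecidableEq m] (M : Matrix m m R) (f : m → m) {s : Finset m} (hf : ∀ i ∈ s, f i ≠ i) :
    ∏ i ∈ s, charmatrix M (f i) i = (-1) ^ #s * C (∏ i ∈ s, M (f i) i) := by
  rw [Finset.prod_congr rfl fun i hi => charmatrix_apply_ne M _ _ (hf i hi), Finset.prod_neg,
    map_prod]

section GainGraph

open Polynomial Equiv Perm

variable {n : ℕ} {G : SimpleGraph (Fin n)}

namespace IsGainMatrix

variable {A : Matrix (Fin n) (Fin n) ℂ}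

theorem apply_self_eq_zero (hA : IsGainMatrix G A) (i : Fin n) : A i i = 0 :=
  hA.2.2 i i G.irrefl

theorem apply_mul_apply_swap (hA : IsGainMatrix G A) {i j : Fin n} (h : G.Adj i j) :
    A i j * A j i = 1 := by
  rw [← hA.1.apply i j, RCLike.star_def, RCLike.conj_mul, hA.2.1 j i h.symm]
  norm_num

theorem prod_support_apply_of_sq_eq_one (hA : IsGainMatrix G A) {σ : Perm (Fin n)}
    (hσ : σ ^ 2 = 1) (hadj : ∀ j ∈ σ.support, G.Adj (σ j) j) :
    ∏ j ∈ σ.support, A (σ j) j = 1 := by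
  have hσσ (j : Fin n) : σ (σ j) = j := by rw [← mul_apply, ← sq, hσ, one_apply]
  refine Finset.prod_involution (fun j _ => σ j) (fun j hj => ?_)
    (fun j hj _ => mem_support.mp hj) (fun j hj => apply_mem_support.mpr hj) (fun j _ => hσσ j)
  rw [hσσ]
  exact hA.apply_mul_apply_swap (hadj j hj)

theorem prod_charmatrix_apply_eq_of_sq_eq_one {A₁ A₂ : Matrix (Fin n) (Fin n) ℂ}
    (h₁ : IsGainMatrix G A₁) (h₂ : IsGainMatrix G A₂) {σ : Perm (Fin n)} (hσ : σ ^ 2 = 1) :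
    ∏ i, charmatrix A₁ (σ i) i = ∏ i, charmatrix A₂ (σ i) i := by
  have hfixed : ∀ i ∈ σ.supportᶜ, charmatrix A₁ (σ i) i = charmatrix A₂ (σ i) i := by
    intro i hi
    rw [notMem_support.mp (Finset.mem_compl.mp hi), charmatrix_apply_eq, charmatrix_apply_eq,
      h₁.apply_self_eq_zero, h₂.apply_self_eq_zero]
  have hmoved : ∏ j ∈ σ.support, A₁ (σ j) j = ∏ j ∈ σ.support, A₂ (σ j) j := by
    by_cases hadj : ∀ j ∈ σ.support, G.Adj (σ j) j
    · rw [h₁.prod_support_apply_of_sq_eq_one hσ hadj, h₂.prod_support_apply_of_sq_eq_one hσ hadj]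
    · push Not at hadj
      obtain ⟨j, hj, hnadj⟩ := hadj
      rw [Finset.prod_eq_zero (f := fun j => A₁ (σ j) j) hj (h₁.2.2 _ _ hnadj),
        Finset.prod_eq_zero (f := fun j => A₂ (σ j) j) hj (h₂.2.2 _ _ hnadj)]
  rw [← Finset.prod_mul_prod_compl σ.support, ← Finset.prod_mul_prod_compl σ.support,
    prod_charmatrix_apply_of_ne A₁ σ fun _ => mem_support.mp,
    prod_charmatrix_apply_of_ne A₂ σ fun _ => mem_support.mp, hmoved, Finset.prod_congr rfl hfixed]

end IsGainMatrix

theorem exists_isCycle_walkGain_eq (A : Matrix (Fin n) (Fin n) ℂ) {σ : Perm (Fin n)}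
    {x : Fin n} (hx : σ (σ x) ≠ x) (hadj : ∀ v ∈ (σ.cycleOf x).support, G.Adj v (σ v)) :
    ∃ w : G.Walk x x, w.IsCycle ∧ walkGain A w = ∏ v ∈ (σ.cycleOf x).support, A v (σ v) := by
  set s := (σ.cycleOf x).support
  have hs : ∀ v ∈ (s : Set (Fin n)), σ v ∈ (s : Set (Fin n)) :=
    fun _ => apply_mem_support_cycleOf_iff.mpr
  have hxs : x ∈ (s : Set (Fin n)) := by
    rw [Finset.mem_coe, mem_support, cycleOf_apply_self]
    exact apply_ne_self_of_apply_apply_ne_self hx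
  have hclosed : σ^[#s] x = x := by
    rw [iterate_eq_pow]
    exact pow_card_support_cycleOf_apply_self σ x
  let w := (SimpleGraph.Walk.ofIterate hs hadj #s x hxs).copy rfl hclosed
  have hsupport : w.support = x :: toList σ (σ x) := by
    simp [w, SimpleGraph.Walk.support_ofIterate, toList, cycleOf_self_apply, List.iterate, s]
  have hlength : 3 ≤ w.length := by
    simpa [w, SimpleGraph.Walk.length_ofIterate] using three_le_card_support_cycleOf hx
  refine ⟨w, SimpleGraph.Walk.isCycle_iff_isPath_tail_and_le_length.mpr ⟨?_, hlength⟩, ?_⟩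
  · rw [SimpleGraph.Walk.isPath_def, SimpleGraph.Walk.support_tail_of_not_nil _
      (SimpleGraph.Walk.not_nil_iff_lt_length.mpr (by omega)), hsupport, List.tail_cons]
    exact nodup_toList σ (σ x)
  · have htoFinset : (toList σ x).toFinset = s := by
      ext v
      simp only [List.mem_toFinset, mem_toList_iff, s, mem_support_cycleOf_iff]
    calc walkGain A w = ((toList σ x).map fun v => A v (σ v)).prod := by
          simpa [walkGain, w, Function.comp_def, toList] using
            congrArg (fun l => (l.map fun p : Fin n × Fin n => A p.1 p.2).prod)
              (SimpleGraph.Walk.map_toProd_darts_ofIterate hs hadj #s x hxs)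
      _ = ∏ v ∈ s, A v (σ v) := by rw [← List.prod_toFinset _ (nodup_toList σ x), htoFinset]

variable {A : Matrix (Fin n) (Fin n) ℂ}

theorem re_prod_support_cycleOf_eq_zero (hA : IsGainMatrix G A)
    (hre : HasPurelyImaginaryCycleGains G A) {σ : Perm (Fin n)} {x : Fin n}
    (hx : σ (σ x) ≠ x) : (∏ v ∈ (σ.cycleOf x).support, A v (σ v)).re = 0 := by
  by_cases hadj : ∀ v ∈ (σ.cycleOf x).support, G.Adj v (σ v)
  · obtain ⟨w, hw, hgain⟩ := exists_isCycle_walkGain_eq A hx hadj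
    rw [← hgain]
    exact hre x w hw
  · push Not at hadj
    obtain ⟨v, hv, hnadj⟩ := hadj
    rw [Finset.prod_eq_zero (f := fun v => A v (σ v)) hv (hA.2.2 _ _ hnadj), Complex.zero_re]

theorem prod_charmatrix_add_prod_charmatrix_reverseCycleOf (hA : IsGainMatrix G A)
    (hre : HasPurelyImaginaryCycleGains G A) {σ : Perm (Fin n)} {x : Fin n}
    (hx : σ (σ x) ≠ x) :
    ∏ i, charmatrix A (σ i) i + ∏ i, charmatrix A (σ.reverseCycleOf x i) i = 0 := by
  set c := σ.cycleOf x
  set g := ∏ v ∈ c.support, A v (σ v)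
  have hne : ∀ i ∈ c.support, σ i ≠ i := fun i hi =>
    cycleOf_apply_of_mem_support hi ▸ mem_support.mp hi
  have hforward : ∏ i ∈ c.support, charmatrix A (σ i) i = (-1) ^ #c.support * C (star g) := by
    rw [prod_charmatrix_apply_of_ne A σ hne, star_prod]
    simp only [hA.1.apply]
  have hbackward :
      ∏ i ∈ c.support, charmatrix A (σ.reverseCycleOf x i) i = (-1) ^ #c.support * C g :=
    calc ∏ i ∈ c.support, charmatrix A (σ.reverseCycleOf x i) i
        = ∏ i ∈ c.support, charmatrix A (c⁻¹ i) i :=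
          Finset.prod_congr rfl fun i hi => by rw [reverseCycleOf_apply_of_mem hi]
      _ = ∏ i ∈ c.support, charmatrix A (c⁻¹ (c i)) (c i) :=
          (c.prod_comp c.support _ fun _ => mem_support.mpr).symm
      _ = ∏ i ∈ c.support, charmatrix Aᵀ (σ i) i :=
          Finset.prod_congr rfl fun i hi => by
            rw [charmatrix_transpose, transpose_apply, inv_eq_iff_eq.mpr rfl,
              cycleOf_apply_of_mem_support hi]
      _ = (-1) ^ #c.support * C g := prod_charmatrix_apply_of_ne Aᵀ σ hne
  have hrest : ∏ i ∈ c.supportᶜ, charmatrix A (σ.reverseCycleOf x i) i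
      = ∏ i ∈ c.supportᶜ, charmatrix A (σ i) i :=
    Finset.prod_congr rfl fun i hi => by
      rw [reverseCycleOf_apply_of_notMem (Finset.mem_compl.mp hi)]
  rw [← Finset.prod_mul_prod_compl c.support, ← Finset.prod_mul_prod_compl c.support, hforward,
    hbackward, hrest, ← add_mul, ← mul_add, ← map_add, RCLike.star_def, add_comm,
    Complex.add_conj, re_prod_support_cycleOf_eq_zero hA hre hx]
  simp

theorem sum_sign_smul_prod_charmatrix_of_sq_ne_one (hA : IsGainMatrix G A)
    (hre : HasPurelyImaginaryCycleGains G A) :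
    ∑ σ ∈ Finset.univ.filter fun σ : Perm (Fin n) => σ ^ 2 ≠ 1,
      sign σ • ∏ i, charmatrix A (σ i) i = 0 := by
  refine Finset.sum_involution (fun σ _ => σ.reverseLeastLongCycle) (fun σ hσ => ?_)
    (fun σ hσ _ => reverseLeastLongCycle_ne_self (Finset.mem_filter.mp hσ).2) (fun σ hσ => ?_)
    (fun σ _ => reverseLeastLongCycle_reverseLeastLongCycle)
  · have h := support_sq_nonempty_iff.mpr (Finset.mem_filter.mp hσ).2
    rw [sign_reverseLeastLongCycle, ← smul_add, reverseLeastLongCycle_eq h,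
      prod_charmatrix_add_prod_charmatrix_reverseCycleOf hA hre
        (mem_support_sq_iff.mp ((σ ^ 2).support.min'_mem h)), smul_zero]
  · rw [Finset.mem_filter, ← support_sq_nonempty_iff, support_sq_reverseLeastLongCycle,
      support_sq_nonempty_iff]
    exact ⟨Finset.mem_univ _, (Finset.mem_filter.mp hσ).2⟩

theorem charpoly_eq_sum_sq_eq_one (hA : IsGainMatrix G A)
    (hre : HasPurelyImaginaryCycleGains G A) :
    A.charpoly = ∑ σ ∈ Finset.univ.filter fun σ : Perm (Fin n) => σ ^ 2 = 1,
      sign σ • ∏ i, charmatrix A (σ i) i := by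
  rw [charpoly, det_apply, ← Finset.sum_filter_add_sum_filter_not Finset.univ (· ^ 2 = 1),
    sum_sign_smul_prod_charmatrix_of_sq_ne_one hA hre, add_zero]

theorem charpoly_eq_of_hasPurelyImaginaryCycleGains {A₁ A₂ : Matrix (Fin n) (Fin n) ℂ}
    (hA₁ : IsGainMatrix G A₁) (hA₂ : IsGainMatrix G A₂)
    (hre₁ : HasPurelyImaginaryCycleGains G A₁) (hre₂ : HasPurelyImaginaryCycleGains G A₂) :
    A₁.charpoly = A₂.charpoly := by
  rw [charpoly_eq_sum_sq_eq_one hA₁ hre₁, charpoly_eq_sum_sq_eq_one hA₂ hre₂]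
  exact Finset.sum_congr rfl fun σ hσ => by
    rw [hA₁.prod_charmatrix_apply_eq_of_sq_eq_one hA₂ (Finset.mem_filter.mp hσ).2]

end GainGraph

theorem equienergetic_of_purely_imaginary_cycle_gains_general {n : ℕ} (G : SimpleGraph (Fin n))
    (A₁ A₂ : Matrix (Fin n) (Fin n) ℂ)
    (hA₁ : IsGainMatrix G A₁) (hA₂ : IsGainMatrix G A₂)
    (hre₁ : ∀ (v : Fin n) (c : G.Walk v v), c.IsCycle → (walkGain A₁ c).re = 0)
    (hre₂ : ∀ (v : Fin n) (c : G.Walk v v), c.IsCycle → (walkGain A₂ c).re = 0) :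
    energy hA₁.1 = energy hA₂.1 := by
  have heigenvalues := (hA₁.1.eigenvalues_eq_eigenvalues_iff hA₂.1).mpr
    (charpoly_eq_of_hasPurelyImaginaryCycleGains hA₁ hA₂ hre₁ hre₂)
  rw [energy, energy, heigenvalues]

/-- If the cycles of `G` are pairwise vertex-disjoint and two gain structures on `G`
both give every cycle a purely imaginary gain, then they are equienergetic. -/
theorem equienergetic_of_purely_imaginary_cycle_gains {n : ℕ} (G : SimpleGraph (Fin n))
    (hdisj : ∀ (u w : Fin n) (c : G.Walk u u) (d : G.Walk w w), c.IsCycle → d.IsCycle →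
      (c.edges.toFinset = d.edges.toFinset ∨
        ∀ x : Fin n, ¬(x ∈ c.support ∧ x ∈ d.support)))
    (A₁ A₂ : Matrix (Fin n) (Fin n) ℂ)
    (hA₁ : IsGainMatrix G A₁) (hA₂ : IsGainMatrix G A₂)
    (hre₁ : ∀ (v : Fin n) (c : G.Walk v v), c.IsCycle → (walkGain A₁ c).re = 0)
    (hre₂ : ∀ (v : Fin n) (c : G.Walk v v), c.IsCycle → (walkGain A₂ c).re = 0) :
    energy hA₁.1 = energy hA₂.1 :=
  equienergetic_of_purely_imaginary_cycle_gains_general G A₁ A₂ hA₁ hA₂ hre₁ hre₂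
end
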